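/- arXiv:2509.03317 — 5 statements merged into one kernel-verified Lean document; each statement's English description precedes it below -/
import Mathlib

section
/- Let μ_1, …, μ_p be Borel probability measures on ℝ and let μ^ind = μ_1 ⊗ ⋯ ⊗ μ_p be their product on ℝ^p. Then every bounded measurable function f : ℝ^p → ℝ can be decomposed as f(x) = Σ_{S ⊆ {1,…,p}} f_S(x_S) for μ^ind-almost every x, where each f_S is a bounded measurable function depending only on the coordinates x_S = (x_j, j ∈ S) and satisfying the identifiability condition: for every j ∈ S, ∫_ℝ f_S(x_S) μ_j(dx_j) = 0 for (⊗_{k ∈ S∖{j}} μ_k)-almost every x_{S∖{j}}. Moreover the decomposition is unique: if (f_S)_{S ⊆ {1,…,p}} and (g_S)_{S ⊆ {1,…,p}} are two such families, then for every S, f_S = g_S almost everywhere with respect to ⊗_{k ∈ S} μ_k. -/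
open MeasureTheory

noncomputable section

/-- `F` is a functional-ANOVA family for `f` with respect to the product of the measures
`μ j`: each component `F S` is bounded, measurable, depends only on the coordinates in `S`,
satisfies the identifiability condition (its integral over each coordinate `j ∈ S` with
respect to `μ j` vanishes for almost every value of the remaining coordinates), and the
components sum to `f` almost everywhere. -/
def IsANOVADecomposition {p : ℕ} (μ : Fin p → Measure ℝ) (f : (Fin p → ℝ) → ℝ)
    (F : Finset (Fin p) → (Fin p → ℝ) → ℝ) : Prop :=
  (∀ S, Measurable (F S)) ∧
  (∀ S, ∃ C : ℝ, ∀ x, |F S x| ≤ C) ∧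
  (∀ S : Finset (Fin p), ∀ x y : Fin p → ℝ, (∀ j ∈ S, x j = y j) → F S x = F S y) ∧
  (∀ S : Finset (Fin p), ∀ j ∈ S, ∀ᵐ x ∂(Measure.pi μ),
      ∫ t, F S (Function.update x j t) ∂(μ j) = 0) ∧
  (∀ᵐ x ∂(Measure.pi μ), f x = ∑ S : Finset (Fin p), F S x)

/-!
Write `E_T g` for `g` with the coordinates outside `T` integrated out against the product
measure. These operators compose as `E_T ∘ E_U = E_{T ∩ U}`, and integrating `g` over the single
coordinate `x_j` is `E_{[p] ∖ {j}} g`. For a decomposition `f = ∑_S f_S`, identifiability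
therefore kills `E_T f_S` unless `S ⊆ T`, while `E_T f_S = f_S` if `S ⊆ T`; so
`E_T f = ∑_{S ⊆ T} f_S`, and Möbius inversion on the Boolean lattice forces
`f_S = ∑_{T ⊆ S} (-1)^{|S ∖ T|} E_T f`. Conversely these Möbius transforms are a decomposition:
they sum to `E_{[p]} f = f`, and integrating out `x_j` with `j ∈ S` turns the summands of
`T` and `T ∪ {j}` into opposite terms.
-/

namespace FunctionalANOVA

open Finset

section Moebius

variable {ι M : Type*} [DecidableEq ι] [AddCommGroup M]

def moebius (h : Finset ι → M) (S : Finset ι) : M :=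
  ∑ T ∈ S.powerset, (-1 : ℤ) ^ #(S \ T) • h T

lemma sum_powerset_sum_powerset_comm (F : Finset ι → Finset ι → M) (S : Finset ι) :
    ∑ T ∈ S.powerset, ∑ R ∈ T.powerset, F T R = ∑ R ∈ S.powerset, ∑ T ∈ Icc R S, F T R :=
  sum_comm' fun T R => by
    simp only [mem_powerset, mem_Icc]
    exact ⟨fun ⟨hTS, hRT⟩ => ⟨⟨hRT, hTS⟩, hRT.trans hTS⟩, fun ⟨⟨hRT, hTS⟩, _⟩ => ⟨hTS, hRT⟩⟩

lemma sum_powerset_sdiff_neg_one_pow_card {R S : Finset ι} (hRS : R ⊆ S) :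
    ∑ U ∈ (S \ R).powerset, (-1 : ℤ) ^ #U = if R = S then 1 else 0 := by
  have : S \ R = ∅ ↔ R = S := by
    rw [sdiff_eq_empty_iff_subset]; exact ⟨hRS.antisymm, fun h => h.ge⟩
  rw [sum_powerset_neg_one_pow_card]
  exact if_congr this rfl rfl

lemma sum_Icc_neg_one_pow_card_sdiff_left {R S : Finset ι} (hRS : R ⊆ S) :
    ∑ T ∈ Icc R S, (-1 : ℤ) ^ #(T \ R) = if R = S then 1 else 0 := by
  have hdisj : ∀ U ∈ (S \ R).powerset, Disjoint U R := fun U hU =>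
    disjoint_of_subset_left (mem_powerset.1 hU) sdiff_disjoint
  rw [Icc_eq_image_powerset hRS, sum_image fun U hU V hV h => ?_]
  · rw [← sum_powerset_sdiff_neg_one_pow_card hRS]
    exact sum_congr rfl fun U hU => by
      rw [union_sdiff_left, sdiff_eq_self_of_disjoint (hdisj U hU)]
  · simpa [union_sdiff_left, sdiff_eq_self_of_disjoint, hdisj U hU, hdisj V hV] using
      congrArg (· \ R) h

lemma sum_Icc_neg_one_pow_card_sdiff_right {R S : Finset ι} (hRS : R ⊆ S) :
    ∑ T ∈ Icc R S, (-1 : ℤ) ^ #(S \ T) = if R = S then 1 else 0 := by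
  rw [← sum_powerset_sdiff_neg_one_pow_card hRS]
  refine sum_nbij' (S \ ·) (S \ ·) (fun T hT => ?_) (fun U hU => ?_) (fun T hT => ?_)
    (fun U hU => ?_) fun _ _ => rfl
  · simp only [mem_Icc, mem_powerset] at hT ⊢
    exact sdiff_subset_sdiff le_rfl hT.1
  · simp only [mem_Icc, mem_powerset, subset_sdiff] at hU ⊢
    exact ⟨⟨hRS, hU.2.symm⟩, sdiff_subset⟩
  · simp only [mem_Icc] at hT
    exact Finset.sdiff_sdiff_eq_self hT.2
  · simp only [mem_powerset] at hU
    exact Finset.sdiff_sdiff_eq_self (hU.trans sdiff_subset)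

theorem sum_powerset_moebius (h : Finset ι → M) (S : Finset ι) :
    ∑ T ∈ S.powerset, moebius h T = h S := by
  simp only [moebius, sum_powerset_sum_powerset_comm (fun T R => (-1 : ℤ) ^ #(T \ R) • h R),
    ← sum_smul]
  rw [sum_congr rfl fun R hR => by rw [sum_Icc_neg_one_pow_card_sdiff_left (mem_powerset.1 hR)]]
  simp [ite_smul]

theorem moebius_sum_powerset (g : Finset ι → M) (S : Finset ι) :
    moebius (fun T => ∑ R ∈ T.powerset, g R) S = g S := by
  simp only [moebius, smul_sum,
    sum_powerset_sum_powerset_comm (fun T R => (-1 : ℤ) ^ #(S \ T) • g R), ← sum_smul]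
  rw [sum_congr rfl fun R hR => by rw [sum_Icc_neg_one_pow_card_sdiff_right (mem_powerset.1 hR)]]
  simp [ite_smul]

theorem moebius_erase_eq_zero (h : Finset ι → M) {S : Finset ι} {j : ι} (hj : j ∈ S) :
    moebius (fun T => h (T.erase j)) S = 0 := by
  obtain ⟨s, hjs, rfl⟩ : ∃ s, j ∉ s ∧ insert j s = S :=
    ⟨S.erase j, notMem_erase j S, insert_erase hj⟩
  rw [moebius, sum_powerset_insert hjs, ← sum_add_distrib]
  refine sum_eq_zero fun T hT => ?_
  have hjT : j ∉ T := fun h => hjs (mem_powerset.1 hT h)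
  have hcard : #(insert j s \ T) = #(s \ T) + 1 := by
    rw [insert_sdiff_of_notMem _ hjT, card_insert_of_notMem fun h => hjs (mem_sdiff.1 h).1]
  rw [hcard, insert_sdiff_insert, sdiff_insert_of_notMem hjs, erase_insert hjT,
    erase_eq_of_notMem hjT, pow_succ]
  simp

end Moebius

section BddMeasurable

variable {α : Type*} [MeasurableSpace α]

def IsBddMeasurable (g : α → ℝ) : Prop :=
  Measurable g ∧ ∃ C, ∀ x, |g x| ≤ C

namespace IsBddMeasurable

variable {g : α → ℝ}

lemma integrable (hg : IsBddMeasurable g) {ν : Measure α} [IsFiniteMeasure ν] :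
    Integrable g ν :=
  let ⟨hm, C, hC⟩ := hg
  .of_bound hm.aestronglyMeasurable C (ae_of_all _ fun x => (Real.norm_eq_abs _).trans_le (hC x))

lemma comp {β : Type*} [MeasurableSpace β] (hg : IsBddMeasurable g) {φ : β → α}
    (hφ : Measurable φ) : IsBddMeasurable (g ∘ φ) :=
  ⟨hg.1.comp hφ, hg.2.imp fun _ hC x => hC (φ x)⟩

lemma zsmul (hg : IsBddMeasurable g) (n : ℤ) : IsBddMeasurable (n • g) := by
  obtain ⟨hm, C, hC⟩ := hg
  refine ⟨hm.const_smul n, |n| * C, fun x => ?_⟩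
  rw [Pi.smul_apply, zsmul_eq_mul, abs_mul, ← Int.cast_abs]
  exact mul_le_mul_of_nonneg_left (hC x) (by positivity)

lemma finsetSum {κ : Type*} {s : Finset κ} {g : κ → α → ℝ}
    (hg : ∀ k ∈ s, IsBddMeasurable (g k)) : IsBddMeasurable (∑ k ∈ s, g k) := by
  choose hm C hC using hg
  refine ⟨by rw [sum_fn]; exact Finset.measurable_sum s hm, ∑ k ∈ s.attach, C k k.2, fun x => ?_⟩
  rw [Finset.sum_apply, ← sum_attach]
  exact (abs_sum_le_sum_abs _ _).trans (sum_le_sum fun k _ => hC k k.2 x)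

end IsBddMeasurable

end BddMeasurable

section ProductSpace

variable {ι : Type*} [Fintype ι] [DecidableEq ι] {X : ι → Type*} [∀ i, MeasurableSpace (X i)]
  (μ : ∀ i, Measure (X i)) [∀ i, IsProbabilityMeasure (μ i)]

omit [Fintype ι] in
lemma measurable_piecewise (T : Finset ι) :
    Measurable fun q : (∀ i, X i) × (∀ i, X i) => T.piecewise q.1 q.2 :=
  measurable_pi_lambda _ fun k => by
    by_cases hk : k ∈ T
    · simp only [piecewise_eq_of_mem _ _ _ hk]; fun_prop
    · simp only [piecewise_eq_of_notMem _ _ _ hk]; fun_prop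

lemma measurePreserving_piecewise (T : Finset ι) :
    MeasurePreserving (fun q : (∀ i, X i) × (∀ i, X i) => T.piecewise q.1 q.2)
      ((Measure.pi μ).prod (Measure.pi μ)) (Measure.pi μ) := by
  set e := MeasurableEquiv.piEquivPiSubtypeProd X (· ∈ T)
  have he := measurePreserving_piEquivPiSubtypeProd μ (· ∈ T)
  have h := (he.symm e).comp ((measurePreserving_fst.comp he).prod (measurePreserving_snd.comp he))
  convert h using 1
  ext q k
  by_cases hk : k ∈ T <;>
    simp [e, hk, MeasurableEquiv.piEquivPiSubtypeProd, Equiv.piEquivPiSubtypeProd]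

/-- `condMean μ T g x` is `E[g | x_T]`: the coordinates outside `T` are integrated out. -/
def condMean (T : Finset ι) (g : (∀ i, X i) → ℝ) (x : ∀ i, X i) : ℝ :=
  ∫ y, g (T.piecewise x y) ∂Measure.pi μ

variable {μ}

lemma IsBddMeasurable.condMean {g : (∀ i, X i) → ℝ} (hg : IsBddMeasurable g) (T : Finset ι) :
    IsBddMeasurable (condMean μ T g) := by
  obtain ⟨hm, C, hC⟩ := hg
  refine ⟨(hm.comp (measurable_piecewise T)).stronglyMeasurable.integral_prod_right'.measurable,
    C, fun x => ?_⟩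
  simpa [FunctionalANOVA.condMean, Real.norm_eq_abs] using
    norm_integral_le_of_norm_le_const (μ := Measure.pi μ)
      (ae_of_all _ fun y => (Real.norm_eq_abs _).trans_le (hC (T.piecewise x y)))

omit [∀ i, IsProbabilityMeasure (μ i)] in
lemma dependsOn_condMean (T : Finset ι) (g : (∀ i, X i) → ℝ) :
    DependsOn (condMean μ T g) T := fun x x' h => by
  simp only [condMean, piecewise_congr (s := T) h fun _ _ => rfl]

lemma condMean_of_dependsOn {S T : Finset ι} (hST : S ⊆ T) {g : (∀ i, X i) → ℝ}
    (hg : DependsOn g S) : condMean μ T g = g := funext fun x => by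
  have : ∀ y, g (T.piecewise x y) = g x := fun y =>
    hg fun i hi => piecewise_eq_of_mem _ _ _ (hST hi)
  simp [condMean, this]

lemma condMean_univ (g : (∀ i, X i) → ℝ) : condMean μ univ g = g :=
  condMean_of_dependsOn (subset_refl univ) (by simpa using dependsOn_univ g)

lemma condMean_condMean (T U : Finset ι) {g : (∀ i, X i) → ℝ} (hg : IsBddMeasurable g) :
    condMean μ T (condMean μ U g) = condMean μ (T ∩ U) g := funext fun x => by
  set h := fun v => g ((T ∩ U).piecewise x v)
  have hpw : ∀ y w, U.piecewise (T.piecewise x y) w = (T ∩ U).piecewise x (U.piecewise y w) :=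
    fun y w => by ext k; by_cases hT : k ∈ T <;> by_cases hU : k ∈ U <;> simp [hT, hU]
  have hh : IsBddMeasurable h :=
    hg.comp (measurable_piecewise (T ∩ U) |>.comp measurable_prodMk_left)
  calc condMean μ T (condMean μ U g) x
      = ∫ y, ∫ w, h (U.piecewise y w) ∂Measure.pi μ ∂Measure.pi μ := by
        simp only [condMean, hpw, h]
    _ = ∫ q, h (U.piecewise q.1 q.2) ∂(Measure.pi μ).prod (Measure.pi μ) :=
        (integral_prod _ (hh.comp (measurable_piecewise U)).integrable).symm
    _ = ∫ v, h v ∂Measure.pi μ := by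
        have hmp := measurePreserving_piecewise μ U
        rw [← integral_map hmp.measurable.aemeasurable
          (by rw [hmp.map_eq]; exact hh.1.aestronglyMeasurable), hmp.map_eq]
    _ = condMean μ (T ∩ U) g x := rfl

lemma condMean_congr_ae (T : Finset ι) {g g' : (∀ i, X i) → ℝ} (h : g =ᵐ[Measure.pi μ] g') :
    condMean μ T g =ᵐ[Measure.pi μ] condMean μ T g' := by
  have := (measurePreserving_piecewise μ T).quasiMeasurePreserving.ae_eq_comp h
  filter_upwards [Measure.ae_ae_of_ae_prod this] with x hx using integral_congr_ae hx

lemma condMean_finsetSum {κ : Type*} (T : Finset ι) {s : Finset κ} {g : κ → (∀ i, X i) → ℝ}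
    (hg : ∀ k ∈ s, IsBddMeasurable (g k)) :
    condMean μ T (∑ k ∈ s, g k) = ∑ k ∈ s, condMean μ T (g k) := funext fun x => by
  simp only [condMean, Finset.sum_apply]
  exact integral_finsetSum s fun k hk =>
    ((hg k hk).comp (measurable_piecewise T |>.comp measurable_prodMk_left)).integrable

omit [∀ i, IsProbabilityMeasure (μ i)] in
lemma condMean_zsmul (T : Finset ι) (n : ℤ) (g : (∀ i, X i) → ℝ) :
    condMean μ T (n • g) = n • condMean μ T g := funext fun x => by
  simp only [condMean, Pi.smul_apply, ← Int.cast_smul_eq_zsmul ℝ, integral_smul]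

lemma integral_update_eq_condMean (j : ι) {g : (∀ i, X i) → ℝ} (hg : Measurable g)
    (x : ∀ i, X i) : ∫ t, g (Function.update x j t) ∂μ j = condMean μ (univ.erase j) g x := by
  have hpw : ∀ y, (univ.erase j).piecewise x y = Function.update x j (y j) := fun y => by
    ext k; by_cases hk : k = j
    · subst hk; simp
    · simp [hk]
  rw [← (measurePreserving_eval μ j).map_eq,
    integral_map (f := fun t => g (Function.update x j t))
      (measurePreserving_eval μ j).measurable.aemeasurable
      (hg.comp (measurable_update x)).aestronglyMeasurable]
  simp [condMean, hpw]

lemma condMean_ae_eq_zero_of_integral_update {T : Finset ι} {j : ι} (hj : j ∉ T)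
    {g : (∀ i, X i) → ℝ} (hg : IsBddMeasurable g)
    (hint : ∀ᵐ x ∂Measure.pi μ, ∫ t, g (Function.update x j t) ∂μ j = 0) :
    condMean μ T g =ᵐ[Measure.pi μ] 0 := by
  have hT : T ∩ univ.erase j = T :=
    inter_eq_left.2 fun i hi => mem_erase.2 ⟨ne_of_mem_of_not_mem hi hj, mem_univ i⟩
  have hzero : condMean μ (univ.erase j) g =ᵐ[Measure.pi μ] 0 := by
    filter_upwards [hint] with x hx
    rw [← integral_update_eq_condMean j hg.1, hx, Pi.zero_apply]
  rw [← hT, ← condMean_condMean T _ hg]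
  filter_upwards [condMean_congr_ae T hzero] with x hx
  exact hx.trans (integral_zero _ _)

variable {f : (∀ i, X i) → ℝ}

variable (μ f) in
def anovaComponent : Finset ι → (∀ i, X i) → ℝ :=
  moebius fun T => condMean μ T f

lemma IsBddMeasurable.anovaComponent (hf : IsBddMeasurable f) (S : Finset ι) :
    IsBddMeasurable (anovaComponent μ f S) :=
  .finsetSum fun T _ => (hf.condMean T).zsmul _

lemma condMean_moebius (U : Finset ι) {h : Finset ι → (∀ i, X i) → ℝ}
    (hh : ∀ T, IsBddMeasurable (h T)) (S : Finset ι) :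
    condMean μ U (moebius h S) = moebius (fun T => condMean μ U (h T)) S := by
  rw [moebius, condMean_finsetSum U fun T _ => (hh T).zsmul _]
  simp only [condMean_zsmul, moebius]

omit [∀ i, IsProbabilityMeasure (μ i)] in
lemma dependsOn_anovaComponent (S : Finset ι) : DependsOn (anovaComponent μ f S) S :=
  fun x y h => by
    simp only [anovaComponent, moebius, Finset.sum_apply, Pi.smul_apply]
    exact sum_congr rfl fun T hT => by
      rw [dependsOn_condMean T f fun i hi => h i (mem_powerset.1 hT hi)]

lemma integral_update_anovaComponent (hf : IsBddMeasurable f) {S : Finset ι} {j : ι}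
    (hj : j ∈ S) (x : ∀ i, X i) :
    ∫ t, anovaComponent μ f S (Function.update x j t) ∂μ j = 0 := by
  have hT : ∀ T : Finset ι, univ.erase j ∩ T = T.erase j := fun T => by
    rw [erase_inter, univ_inter]
  rw [integral_update_eq_condMean j (hf.anovaComponent S).1, anovaComponent,
    condMean_moebius _ fun T => hf.condMean T]
  simp only [condMean_condMean _ _ hf, hT]
  rw [moebius_erase_eq_zero (fun T => condMean μ T f) hj, Pi.zero_apply]

lemma sum_anovaComponent : ∑ S, anovaComponent μ f S = f := by
  rw [← powerset_univ, anovaComponent, sum_powerset_moebius, condMean_univ]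

end ProductSpace

end FunctionalANOVA

section

open FunctionalANOVA Finset

variable {p : ℕ} {μ : Fin p → Measure ℝ} [∀ j, IsProbabilityMeasure (μ j)]
  {f : (Fin p → ℝ) → ℝ}

lemma isANOVADecomposition_anovaComponent (hf : IsBddMeasurable f) :
    IsANOVADecomposition μ f (anovaComponent μ f) :=
  ⟨fun S => (hf.anovaComponent S).1, fun S => (hf.anovaComponent S).2,
    fun S => dependsOn_anovaComponent S,
    fun _ _ hj => ae_of_all _ (integral_update_anovaComponent hf hj),
    ae_of_all _ fun x => by rw [← Finset.sum_apply, sum_anovaComponent]⟩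

lemma IsANOVADecomposition.condMean_ae_eq {F : Finset (Fin p) → (Fin p → ℝ) → ℝ}
    (hF : IsANOVADecomposition μ f F) (T : Finset (Fin p)) :
    condMean μ T f =ᵐ[Measure.pi μ] ∑ S ∈ T.powerset, F S := by
  obtain ⟨hm, hb, hdep, hid, hsum⟩ := hF
  have hbm : ∀ S, IsBddMeasurable (F S) := fun S => ⟨hm S, hb S⟩
  have hf : f =ᵐ[Measure.pi μ] ∑ S, F S := by
    filter_upwards [hsum] with x hx
    rw [hx, Finset.sum_apply]
  have hcomp : ∀ᵐ x ∂Measure.pi μ, ∀ S, condMean μ T (F S) x = if S ⊆ T then F S x else 0 := by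
    refine Filter.eventually_all.2 fun S => ?_
    by_cases hST : S ⊆ T
    · exact ae_of_all _ fun x => by rw [if_pos hST, condMean_of_dependsOn hST (hdep S)]
    · obtain ⟨j, hjS, hjT⟩ := not_subset.1 hST
      filter_upwards [condMean_ae_eq_zero_of_integral_update hjT (hbm S) (hid S j hjS)]
        with x hx
      rw [if_neg hST, hx, Pi.zero_apply]
  filter_upwards [condMean_congr_ae T hf, hcomp] with x hx hcompx
  rw [hx, condMean_finsetSum T fun S _ => hbm S, Finset.sum_apply, Finset.sum_apply]
  simp only [hcompx, ← sum_filter]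
  congr 1
  ext S
  simp

lemma IsANOVADecomposition.ae_eq_anovaComponent {F : Finset (Fin p) → (Fin p → ℝ) → ℝ}
    (hF : IsANOVADecomposition μ f F) (S : Finset (Fin p)) :
    F S =ᵐ[Measure.pi μ] anovaComponent μ f S := by
  have h : ∀ᵐ x ∂Measure.pi μ, ∀ T, condMean μ T f x = ∑ R ∈ T.powerset, F R x :=
    Filter.eventually_all.2 fun T =>
      (hF.condMean_ae_eq T).mono fun x hx => by rw [hx, Finset.sum_apply]
  filter_upwards [h] with x hx
  conv_lhs => rw [← moebius_sum_powerset F S]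
  simp only [anovaComponent, moebius, Finset.sum_apply, Pi.smul_apply, hx]

end

/-- every bounded measurable function on `ℝ^p` admits a functional ANOVA
decomposition `f = ∑_{S ⊆ [p]} f_S` (almost everywhere with respect to
`μ^ind = μ_1 ⊗ ⋯ ⊗ μ_p`) whose components satisfy the identifiability condition, and this
decomposition is unique up to null sets. -/
theorem stmt0 (p : ℕ) (μ : Fin p → Measure ℝ) [∀ j, IsProbabilityMeasure (μ j)]
    (f : (Fin p → ℝ) → ℝ) (hmeas : Measurable f) (C : ℝ) (hbdd : ∀ x, |f x| ≤ C) :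
    (∃ F : Finset (Fin p) → (Fin p → ℝ) → ℝ, IsANOVADecomposition μ f F) ∧
    (∀ F G : Finset (Fin p) → (Fin p → ℝ) → ℝ,
      IsANOVADecomposition μ f F → IsANOVADecomposition μ f G →
      ∀ S : Finset (Fin p), F S =ᵐ[Measure.pi μ] G S) := by
  exact ⟨⟨_, isANOVADecomposition_anovaComponent ⟨hmeas, C, hbdd⟩⟩,
    fun F G hF hG S => (hF.ae_eq_anovaComponent S).trans (hG.ae_eq_anovaComponent S).symm⟩
end
end

section
/- Let S = {ℓ_1,…,ℓ_d} ⊆ {1,…,p}, let μ_j (j ∈ S) be Borel probability measures on ℝ, and let s_j ∈ ℝ (j ∈ S) be split values with 0 < μ_j{x : x > s_j} < 1. Define 𝔞_j = −μ_j{x : x ≤ s_j} / μ_j{x : x > s_j} and, for v ∈ {−1,1}^d, 𝔞_v = ∏_{j=1}^d 𝔞_{ℓ_j}^{𝟙(v_{ℓ_j} = 1)}. Then a height vector (β_v)_{v ∈ {−1,1}^d} satisfies the μ-identifiability condition if and only if β_v = β_{(−1,…,−1)} · 𝔞_v for every v ∈ {−1,1}^d. In particular, the space of height vectors satisfying the μ-identifiability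 condition is one-dimensional (its degree of freedom is 1). -/
open MeasureTheory

noncomputable section

/-- The coefficient `𝔞_j = −μ_j{x ≤ s_j} / μ_j{x > s_j}` attached to the split value `s j`. -/
def splitCoeff {p : ℕ} (μ : Fin p → Measure ℝ) (s : Fin p → ℝ) (j : Fin p) : ℝ :=
  -((μ j {x | x ≤ s j}).toReal / (μ j {x | s j < x}).toReal)

/-- `𝔞_v = ∏_{j ∈ S} 𝔞_j^{𝟙(v_j = 1)}`, where `v j = true` encodes `v_j = 1`. -/
def splitCoeffV {p : ℕ} (S : Finset (Fin p)) (μ : Fin p → Measure ℝ) (s : Fin p → ℝ)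
    (v : {j // j ∈ S} → Bool) : ℝ :=
  ∏ j : {j // j ∈ S}, (if v j then splitCoeff μ s j.val else 1)

/-- The μ-identifiability condition for the height vector `β` of a binary-product tree with
split-variable set `S` and split values `s`: for every `k ∈ S` and every choice of the
remaining signs, `∑_{v_k ∈ {−1,1}} β_v μ_k^{(v_k)}{x > s_k} = 0`. -/
def HeightIdentifiable {p : ℕ} (S : Finset (Fin p)) (μ : Fin p → Measure ℝ) (s : Fin p → ℝ)
    (β : ({j // j ∈ S} → Bool) → ℝ) : Prop :=
  ∀ (k : {j // j ∈ S}) (v : {j // j ∈ S} → Bool),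
    β (Function.update v k true) * (μ k.val {x | s k.val < x}).toReal +
      β (Function.update v k false) * (1 - (μ k.val {x | s k.val < x}).toReal) = 0

/-!
The identifiability condition says, coordinate by coordinate, that switching the sign `v_k`
from `−1` to `1` multiplies the height by `𝔞_k`. Starting from `β_{(−1,…,−1)}` and switching on
the coordinates with `v_j = 1` one at a time gives `β_v = β_{(−1,…,−1)} 𝔞_v`, and conversely
such a product satisfies every one-coordinate relation.
-/

section BoolProduct

variable {ι M : Type*} [Fintype ι] [DecidableEq ι] [CommMonoid M]

theorem prod_ite_update_true (a : ι → M) (v : ι → Bool) (k : ι) :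
    ∏ j, (if Function.update v k true j then a j else 1) =
      a k * ∏ j, (if Function.update v k false j then a j else 1) := by
  rw [Fintype.prod_eq_mul_prod_compl k, Fintype.prod_eq_mul_prod_compl k
    (fun j => if Function.update v k false j then a j else 1)]
  simp only [Function.update_self, if_true, Bool.false_eq_true, if_false, one_mul]
  congr 1
  refine Finset.prod_congr rfl fun j hj => ?_
  have hjk : j ≠ k := by simpa using hj
  rw [Function.update_of_ne hjk, Function.update_of_ne hjk]

theorem forall_update_true_eq_mul_iff (a : ι → M) (β : (ι → Bool) → M) :
    (∀ k v, β (Function.update v k true) = a k * β (Function.update v k false)) ↔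
      ∀ v, β v = β (fun _ => false) * ∏ j, (if v j then a j else 1) := by
  constructor
  · intro h v
    suffices hT : ∀ T : Finset ι, β (fun j => decide (j ∈ T)) = β (fun _ => false) * ∏ j ∈ T, a j by
      rw [← Finset.prod_filter]
      simpa using hT (Finset.univ.filter fun j => v j)
    intro T
    induction T using Finset.induction_on with
    | empty => simp
    | insert k T hk ih =>
      have hins : (fun j => decide (j ∈ insert k T)) =
          Function.update (fun j => decide (j ∈ T)) k true := by
        ext j
        by_cases hjk : j = k
        · subst hjk; simp
        · simp [hjk]
      have hdel : Function.update (fun j => decide (j ∈ T)) k false =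
          fun j => decide (j ∈ T) := by
        simpa [Function.update_eq_self_iff] using hk
      rw [hins, h, hdel, ih, Finset.prod_insert hk, mul_left_comm]
  · intro h k v
    rw [h, h (Function.update v k false), prod_ite_update_true, mul_left_comm]

end BoolProduct

theorem measure_le_toReal_eq_one_sub (ν : Measure ℝ) [IsProbabilityMeasure ν] (t : ℝ) :
    (ν {x | x ≤ t}).toReal = 1 - (ν {x | t < x}).toReal := by
  have hcompl : {x : ℝ | x ≤ t} = {x | t < x}ᶜ := by ext x; simp
  rw [hcompl]
  exact probReal_compl_eq_one_sub measurableSet_Ioi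

theorem splitCoeff_mul_measure {p : ℕ} (μ : Fin p → Measure ℝ)
    [∀ j, IsProbabilityMeasure (μ j)] (s : Fin p → ℝ) (j : Fin p)
    (hpos : (μ j {x | s j < x}).toReal ≠ 0) :
    splitCoeff μ s j * (μ j {x | s j < x}).toReal = -(1 - (μ j {x | s j < x}).toReal) := by
  rw [splitCoeff, measure_le_toReal_eq_one_sub]
  field_simp

theorem heightIdentifiable_iff_update {p : ℕ} (S : Finset (Fin p)) (μ : Fin p → Measure ℝ)
    [∀ j, IsProbabilityMeasure (μ j)] (s : Fin p → ℝ)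
    (hpos : ∀ j ∈ S, (μ j {x | s j < x}).toReal ≠ 0) (β : ({j // j ∈ S} → Bool) → ℝ) :
    HeightIdentifiable S μ s β ↔ ∀ k v,
      β (Function.update v k true) = splitCoeff μ s k.val * β (Function.update v k false) := by
  refine forall₂_congr fun k v => ?_
  have hm := hpos k.val k.prop
  have hcoeff := splitCoeff_mul_measure μ s k.val hm
  constructor
  · intro h
    apply mul_right_cancel₀ hm
    linear_combination h - β (Function.update v k false) * hcoeff
  · intro h
    rw [h]
    linear_combination β (Function.update v k false) * hcoeff

theorem heightIdentifiable_iff_eq_mul_splitCoeffV {p : ℕ} (S : Finset (Fin p))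
    (μ : Fin p → Measure ℝ) [∀ j, IsProbabilityMeasure (μ j)] (s : Fin p → ℝ)
    (hpos : ∀ j ∈ S, (μ j {x | s j < x}).toReal ≠ 0) (β : ({j // j ∈ S} → Bool) → ℝ) :
    HeightIdentifiable S μ s β ↔ ∀ v, β v = β (fun _ => false) * splitCoeffV S μ s v := by
  rw [heightIdentifiable_iff_update S μ s hpos]
  exact forall_update_true_eq_mul_iff (fun j => splitCoeff μ s j.val) β

theorem splitCoeffV_false {p : ℕ} (S : Finset (Fin p)) (μ : Fin p → Measure ℝ)
    (s : Fin p → ℝ) : splitCoeffV S μ s (fun _ => false) = 1 := by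
  simp [splitCoeffV]

/-- a height vector satisfies the μ-identifiability condition iff
`β_v = β_{(−1,…,−1)} ⬝ 𝔞_v` for every `v`; in particular, the space of identifiable height
vectors is one-dimensional: it consists exactly of the multiples of `v ↦ 𝔞_v`. -/
theorem stmt1 {p : ℕ} (S : Finset (Fin p)) (μ : Fin p → Measure ℝ)
    [∀ j, IsProbabilityMeasure (μ j)] (s : Fin p → ℝ)
    (hs : ∀ j ∈ S, 0 < (μ j {x | s j < x}).toReal ∧ (μ j {x | s j < x}).toReal < 1)
    (β : ({j // j ∈ S} → Bool) → ℝ) :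
    (HeightIdentifiable S μ s β ↔
      ∀ v, β v = β (fun _ => false) * splitCoeffV S μ s v) ∧
    {β' : ({j // j ∈ S} → Bool) → ℝ | HeightIdentifiable S μ s β'} =
      {β' | ∃ c : ℝ, ∀ v, β' v = c * splitCoeffV S μ s v} := by
  have hpos : ∀ j ∈ S, (μ j {x | s j < x}).toReal ≠ 0 := fun j hj => (hs j hj).1.ne'
  have key := heightIdentifiable_iff_eq_mul_splitCoeffV S μ s hpos
  refine ⟨key β, Set.ext fun β' => ?_⟩
  simp only [Set.mem_ofPred_eq, key β']
  constructor
  · exact fun h => ⟨_, h⟩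
  · rintro ⟨c, hc⟩ v
    rw [hc v, hc (fun _ => false), splitCoeffV_false, mul_one]
end
end

section
/- Let r ≥ 2 and let w ∈ ℝ^r satisfy w_j ≥ 0 for all j and Σ_{j=1}^r w_j = 1. For j ∈ {1,…,r}, let 𝟏_j ∈ ℝ^r be the vector whose first j entries are 1 and whose remaining entries are 0, and let 𝟏_j^c = 𝟏_r − 𝟏_j. Then for every u ∈ ℝ^r with ⟨w, u⟩ = 0 there exist real numbers (a_j, b_j), j = 1,…,r−1, such that: (i) u = Σ_{j=1}^{r−1} (a_j 𝟏_j + b_j 𝟏_j^c); (ii) ⟨w, a_j 𝟏_j + b_j 𝟏_j^c⟩ = 0 for every j ∈ {1,…,r−1}; and (iii) max{|a_j|, |b_j| : j ∈ {1,…,r−1}} ≤ 2 ‖u‖_∞, where ‖u‖_∞ = max_j |u_j|. -/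
/-!
Write `u` as its first entry plus a telescoping sum of its increments `d_j = u_j - u_{j-1}`
placed on the tails `𝟏_j^c`. Since `⟨w, u⟩ = 0`, subtracting from every tail its `w`-mean
`1 - W_j` (with `W_j = w_1 + ⋯ + w_j`) absorbs the constant, giving
`u = ∑ d_j ((W_j - 1) 𝟏_j + W_j 𝟏_j^c)`. Each summand is `w`-orthogonal, and
`|d_j| ≤ 2 ‖u‖_∞` with `W_j ∈ [0, 1]` bounds its heights.
-/

open Finset

noncomputable section

section Centering
variable {ι κ : Type*} [Fintype ι]

def centered (w f : ι → ℝ) (i : ι) : ℝ := f i - ∑ k, w k * f k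

variable {w : ι → ℝ}

theorem eq_sum_mul_centered (hw : ∑ i, w i = 1) {u : ι → ℝ} (hu : ∑ i, w i * u i = 0)
    {s : Finset κ} {c : ℝ} {d : κ → ℝ} {f : κ → ι → ℝ}
    (h : ∀ i, u i = c + ∑ j ∈ s, d j * f j i) (i : ι) :
    u i = ∑ j ∈ s, d j * centered w (f j) i := by
  have hc : c + ∑ j ∈ s, d j * ∑ k, w k * f j k = 0 := by
    rw [← hu]
    simp_rw [h, mul_add, sum_add_distrib, ← sum_mul, hw, one_mul, mul_sum]
    rw [sum_comm]
    simp_rw [mul_left_comm]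
  simp only [centered, mul_sub, sum_sub_distrib]
  linarith [h i]

end Centering

theorem sum_Icc_sub_mul_ite_lt (v : ℕ → ℝ) {i n : ℕ} (hi : i ≤ n) :
    ∑ j ∈ Icc 1 n, (v j - v (j - 1)) * (if i < j then 0 else 1) = v i - v 0 := by
  have hfilter : {j ∈ Icc 1 n | ¬ i < j} = Icc 1 i := by
    ext j; simp only [mem_filter, mem_Icc]; omega
  simp only [mul_ite, mul_zero, mul_one]
  rw [sum_ite, sum_const_zero, zero_add, hfilter]
  clear hi hfilter
  induction i with
  | zero => simp
  | succ i ih => rw [sum_Icc_succ_top (by omega), ih, Nat.add_sub_cancel]; ring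

/-- The paper's `a 𝟏_j + b 𝟏_j^c`. -/
def stepVector {r : ℕ} (j : ℕ) (a b : ℝ) (i : Fin r) : ℝ :=
  a * (if (i : ℕ) < j then 1 else 0) + b * (if (i : ℕ) < j then 0 else 1)

def headWeight {r : ℕ} (w : Fin r → ℝ) (j : ℕ) : ℝ := ∑ i : Fin r with i.val < j, w i

section Steps
variable {r : ℕ} {w : Fin r → ℝ}

theorem headWeight_nonneg (hw0 : ∀ i, 0 ≤ w i) (j : ℕ) : 0 ≤ headWeight w j :=
  sum_nonneg fun i _ => hw0 i

theorem headWeight_le_one (hw0 : ∀ i, 0 ≤ w i) (hw : ∑ i, w i = 1) (j : ℕ) :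
    headWeight w j ≤ 1 :=
  hw ▸ sum_le_sum_of_subset_of_nonneg (filter_subset _ _) fun i _ _ => hw0 i

theorem sum_mul_stepVector (hw : ∑ i, w i = 1) (j : ℕ) (a b : ℝ) :
    ∑ i, w i * stepVector j a b i = a * headWeight w j + b * (1 - headWeight w j) := by
  have hsplit := sum_filter_add_sum_filter_not univ (fun i : Fin r => i.val < j) w
  rw [hw] at hsplit
  simp only [stepVector, mul_add, sum_add_distrib, mul_ite, mul_one, mul_zero, sum_ite,
    sum_const_zero, zero_add, add_zero, ← sum_mul, headWeight]
  linear_combination b * hsplit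

theorem centered_stepVector_zero_one (hw : ∑ i, w i = 1) (j : ℕ) (i : Fin r) :
    centered w (stepVector j 0 1) i = stepVector j (headWeight w j - 1) (headWeight w j) i := by
  rw [centered, sum_mul_stepVector hw]
  simp only [stepVector]
  split_ifs <;> ring

theorem abs_headWeight_le_one (hw0 : ∀ i, 0 ≤ w i) (hw : ∑ i, w i = 1) (j : ℕ) :
    |headWeight w j| ≤ 1 :=
  abs_le.2 ⟨by linarith [headWeight_nonneg hw0 j], headWeight_le_one hw0 hw j⟩

theorem abs_headWeight_sub_one_le_one (hw0 : ∀ i, 0 ≤ w i) (hw : ∑ i, w i = 1) (j : ℕ) :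
    |headWeight w j - 1| ≤ 1 :=
  abs_le.2 ⟨by linarith [headWeight_nonneg hw0 j], by linarith [headWeight_le_one hw0 hw j]⟩

theorem mul_stepVector (c : ℝ) (j : ℕ) (a b : ℝ) (i : Fin r) :
    c * stepVector j a b i = stepVector j (c * a) (c * b) i := by
  simp only [stepVector]; ring

end Steps

/-- decomposition of a `w`-orthogonal vector `u ∈ ℝ^r` as a sum
`u = ∑_{j=1}^{r−1} (a_j 𝟏_j + b_j 𝟏_j^c)` of `w`-orthogonal "step" vectors, with
`max{|a_j|, |b_j|} ≤ 2 ‖u‖_∞`.  Here `𝟏_j` has its first `j` entries equal to `1` and the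
rest equal to `0`, and `𝟏_j^c = 𝟏_r − 𝟏_j`. -/
theorem stmt4 (r : ℕ) (hr : 2 ≤ r) (w : Fin r → ℝ) (hw0 : ∀ j, 0 ≤ w j)
    (hw1 : ∑ j, w j = 1) (u : Fin r → ℝ) (hu : ∑ j, w j * u j = 0) :
    ∃ a b : ℕ → ℝ,
      (∀ i : Fin r, u i = ∑ j ∈ Finset.Icc 1 (r - 1),
        (a j * (if (i : ℕ) < j then 1 else 0) + b j * (if (i : ℕ) < j then 0 else 1))) ∧
      (∀ j ∈ Finset.Icc 1 (r - 1),
        ∑ i : Fin r, w i *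
          (a j * (if (i : ℕ) < j then 1 else 0) + b j * (if (i : ℕ) < j then 0 else 1)) = 0) ∧
      (∀ j ∈ Finset.Icc 1 (r - 1),
        |a j| ≤ 2 * Finset.univ.sup' (Finset.univ_nonempty_iff.mpr ⟨⟨0, by omega⟩⟩)
            (fun i : Fin r => |u i|) ∧
        |b j| ≤ 2 * Finset.univ.sup' (Finset.univ_nonempty_iff.mpr ⟨⟨0, by omega⟩⟩)
            (fun i : Fin r => |u i|)) := by
  set M := Finset.univ.sup' (Finset.univ_nonempty_iff.mpr ⟨⟨0, by omega⟩⟩)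
      (fun i : Fin r => |u i|)
  -- `v` extends `u` to `ℕ`, so that the increments `v j - v (j - 1)` need no index bookkeeping.
  set v : ℕ → ℝ := fun n => if h : n < r then u ⟨n, h⟩ else 0
  set W := headWeight w
  have hv : ∀ n, |v n| ≤ M := by
    intro n
    by_cases h : n < r
    · simpa [v, h] using le_sup' (fun i : Fin r => |u i|) (mem_univ ⟨n, h⟩)
    · simpa [v, h] using
        (abs_nonneg _).trans (le_sup' (fun i : Fin r => |u i|) (mem_univ ⟨0, by omega⟩))
  have hd : ∀ j, |v j - v (j - 1)| ≤ 2 * M := fun j =>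
    (abs_sub _ _).trans (by linarith [hv j, hv (j - 1)])
  refine ⟨fun j => (v j - v (j - 1)) * (W j - 1), fun j => (v j - v (j - 1)) * W j,
    fun i => ?_, fun j _ => ?_, fun j _ => ?_⟩
  · have htel : ∀ i : Fin r,
        u i = v 0 + ∑ j ∈ Icc 1 (r - 1), (v j - v (j - 1)) * stepVector j 0 1 i := by
      intro i
      simp only [stepVector, zero_mul, zero_add, one_mul]
      rw [sum_Icc_sub_mul_ite_lt v (by omega : (i : ℕ) ≤ r - 1)]
      simp [v]
    rw [eq_sum_mul_centered hw1 hu htel i]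
    refine sum_congr rfl fun j _ => ?_
    rw [centered_stepVector_zero_one hw1, mul_stepVector]
    rfl
  · exact (sum_mul_stepVector hw1 j _ _).trans (by ring)
  · simp only [abs_mul]
    exact ⟨(mul_le_of_le_one_right (abs_nonneg _)
        (abs_headWeight_sub_one_le_one hw0 hw1 j)).trans (hd j),
      (mul_le_of_le_one_right (abs_nonneg _) (abs_headWeight_le_one hw0 hw1 j)).trans (hd j)⟩
end
end

section
/- Let S be a finite set with |S| = d, let ℙ_j (j ∈ S) be Borel probability measures on [0,1] each admitting a density bounded below by p_L > 0, and let ℙ^ind = ⊗_{j ∈ S} ℙ_j on [0,1]^d. For an integer r ≥ 1, let 𝒫_j^EP be the equal-probability partition of [0,1] into the r intervals (q_{j,ℓ−1}, q_{j,ℓ}] determined by the ℓ/r-quantiles q_{j,ℓ} of ℙ_j, and for 𝓵 ∈ {1,…,r}^d let I_𝓵 = ∏_{j∈S} I_{j,ℓ_j} be the corresponding product cell. Let g : [0,1]^d → ℝ be α-Hölder with constant ‖g‖_{H^α} for some α ∈ (0,1], and suppose g satisfies the ℙ^ind-identifiability condition: for every j ∈ S and every value of the remaining coordinates, ∫ g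 dℙ_j = 0. Define γ_𝓵 = (1/ℙ^ind(I_𝓵)) ∫_{I_𝓵} g dℙ^ind and f(x) = Σ_𝓵 γ_𝓵 𝟙(x ∈ I_𝓵). Then: (i) f satisfies the ℙ^ind-identifiability condition, i.e. for every j ∈ S and every 𝓵 with its j-th coordinate removed, Σ_{k=1}^r γ_{𝓵 with j-th entry k} ℙ_j(I_{j,k}) = 0; and (ii) sup_{x ∈ [0,1]^d} |g(x) − f(x)| ≤ ‖g‖_{H^α} (√d / (r p_L))^α. -/
/-!
Every marginal has no atoms, so `t ↦ ℙ_j[0, t]` is continuous and the quantiles hit the levels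
`ℓ/r` exactly: each cell has mass `1/r`. As the density is at least `p_L`, a cell of mass `1/r`
has length at most `1/(r p_L)`, and the last quantile is `1`, so the cells tile `[0, 1]`. A product
cell therefore has Euclidean diameter at most `√d/(r p_L)`, and on it `f` is the average of `g`
over the cell, within `‖g‖_{H^α} (√d/(r p_L))^α` of every value of `g` there.

For identifiability, `γ_𝓵 ℙ_j(I_{j,ℓ_j})` is the integral of `g` over the cell divided by a factor
independent of `ℓ_j`. Summing over `ℓ_j` glues the cells into a slab `{x_j ∈ [0, 1]}`, and since
resampling coordinate `j` preserves `ℙ^ind`, Fubini writes the integral over the slab as an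
integral of the vanishing integrals `∫ g dℙ_j`.
-/

open MeasureTheory Finset

noncomputable section

/-- The multinary-product tree with coordinate partitions `P j 0, …, P j (φ j − 1)` and
heights `γ`: `f(x) = ∑_𝓵 γ_𝓵 ∏_j 𝟙(x_j ∈ I_{j,ℓ_j})`. -/
def treeFun {ι : Type*} [Fintype ι] [DecidableEq ι] (φ : ι → ℕ) (P : ι → ℕ → Set ℝ)
    (γ : (ι → ℕ) → ℝ) (x : ι → ℝ) : ℝ :=
  ∑ 𝓵 ∈ Fintype.piFinset (fun j => Finset.range (φ j)),
    γ 𝓵 * ∏ j, Set.indicator (P j (𝓵 j)) (fun _ => (1 : ℝ)) (x j)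

open Function

theorem treeFun_eq_of_mem {ι : Type*} [Fintype ι] [DecidableEq ι] {φ : ι → ℕ}
    {I : ι → ℕ → Set ℝ} (hI : ∀ j, (↑(Finset.range (φ j)) : Set ℕ).PairwiseDisjoint (I j))
    (γ : (ι → ℕ) → ℝ) {x : ι → ℝ} {𝓵 : ι → ℕ} (h𝓵 : ∀ j, 𝓵 j < φ j)
    (hx : ∀ j, x j ∈ I j (𝓵 j)) :
    treeFun φ I γ x = γ 𝓵 := by
  have h𝓵mem : 𝓵 ∈ Fintype.piFinset fun j => Finset.range (φ j) :=
    Fintype.mem_piFinset.2 fun j => Finset.mem_range.2 (h𝓵 j)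
  rw [treeFun, Finset.sum_eq_single_of_mem 𝓵 h𝓵mem, Finset.prod_eq_one, mul_one]
  · exact fun j _ => Set.indicator_of_mem (hx j) _
  · intro 𝓶 h𝓶 hne
    obtain ⟨j, hj⟩ := Function.ne_iff.1 hne
    have hxj : x j ∉ I j (𝓶 j) := Set.disjoint_left.1
      (hI j (Finset.mem_coe.2 (Finset.mem_range.2 (h𝓵 j)))
        (Finset.mem_coe.2 (Fintype.mem_piFinset.1 h𝓶 j)) (Ne.symm hj)) (hx j)
    rw [Finset.prod_eq_zero (Finset.mem_univ j) (Set.indicator_of_notMem hxj _), mul_zero]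

section PiSlices

variable {ι : Type*} [Fintype ι] [DecidableEq ι] {α : ι → Type*} [∀ i, MeasurableSpace (α i)]
  (μ : ∀ i, Measure (α i))

theorem measurePreserving_update [∀ i, SigmaFinite (μ i)] (j : ι) [IsProbabilityMeasure (μ j)] :
    MeasurePreserving (fun p : α j × (∀ i, α i) => update p.2 j p.1)
      ((μ j).prod (Measure.pi μ)) (Measure.pi μ) where
  measurable := by fun_prop
  map_eq := by
    refine (Measure.pi_eq fun s hs => ?_).symm
    have hpre : (fun p : α j × (∀ i, α i) => update p.2 j p.1) ⁻¹' Set.univ.pi s =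
        s j ×ˢ Set.univ.pi (update s j Set.univ) := by
      ext ⟨t, x⟩
      simp only [Set.mem_preimage, Set.mem_univ_pi, Set.mem_prod]
      constructor
      · intro h
        refine ⟨by simpa using h j, fun i => ?_⟩
        rcases eq_or_ne i j with rfl | hi
        · simp
        · simpa [hi] using h i
      · rintro ⟨ht, hx⟩ i
        rcases eq_or_ne i j with rfl | hi
        · simpa using ht
        · simpa [hi] using hx i
    rw [Measure.map_apply (by fun_prop) (MeasurableSet.univ_pi hs), hpre, Measure.prod_prod,
      Measure.pi_pi]
    simp_rw [apply_update (fun i => μ i) s j Set.univ]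
    rw [Finset.prod_update_of_mem (Finset.mem_univ j), measure_univ, one_mul,
      ← Finset.mul_prod_erase _ _ (Finset.mem_univ j), Finset.sdiff_singleton_eq_erase]

theorem integral_pi_eq_zero_of_integral_update [∀ i, SigmaFinite (μ i)] (j : ι)
    [IsProbabilityMeasure (μ j)] {f : (∀ i, α i) → ℝ} (hf : Integrable f (Measure.pi μ))
    (h : ∀ x, ∫ t, f (update x j t) ∂μ j = 0) :
    ∫ x, f x ∂Measure.pi μ = 0 := by
  set Φ := fun p : α j × (∀ i, α i) => update p.2 j p.1
  have hΦ : MeasurePreserving Φ ((μ j).prod (Measure.pi μ)) (Measure.pi μ) :=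
    measurePreserving_update μ j
  have hf' : AEStronglyMeasurable f (((μ j).prod (Measure.pi μ)).map Φ) := by
    rw [hΦ.map_eq]; exact hf.aestronglyMeasurable
  calc ∫ x, f x ∂Measure.pi μ = ∫ x, f x ∂((μ j).prod (Measure.pi μ)).map Φ := by
        rw [hΦ.map_eq]
    _ = ∫ x, ∫ t, f (update x j t) ∂μ j ∂Measure.pi μ :=
        (integral_map hΦ.measurable.aemeasurable hf').trans
          (integral_prod_symm _ (hΦ.integrable_comp_of_integrable hf))
    _ = 0 := by simp [h]

theorem setIntegral_univ_pi_eq_zero_of_setIntegral_update [∀ i, SigmaFinite (μ i)] (j : ι)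
    [IsProbabilityMeasure (μ j)] {J : ∀ i, Set (α i)} (hJ : ∀ i, MeasurableSet (J i))
    {f : (∀ i, α i) → ℝ} (hf : IntegrableOn f (Set.univ.pi J) (Measure.pi μ))
    (h : ∀ x, (∀ i ≠ j, x i ∈ J i) → ∫ t in J j, f (update x j t) ∂μ j = 0) :
    ∫ x in Set.univ.pi J, f x ∂Measure.pi μ = 0 := by
  rw [← integral_indicator (MeasurableSet.univ_pi hJ)]
  refine integral_pi_eq_zero_of_integral_update μ j
    ((integrable_indicator_iff (MeasurableSet.univ_pi hJ)).2 hf) fun x => ?_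
  by_cases hx : ∀ i ≠ j, x i ∈ J i
  · have hslice : ∀ t, (Set.univ.pi J).indicator f (update x j t) =
        (J j).indicator (fun t => f (update x j t)) t := fun t => by
      rw [← Set.update_preimage_univ_pi hx]
      exact (Set.indicator_comp_right _).symm
    simp_rw [hslice, integral_indicator (hJ j)]
    exact h x hx
  · push Not at hx
    obtain ⟨i, hij, hxi⟩ := hx
    have hslice : ∀ t, (Set.univ.pi J).indicator f (update x j t) = 0 := fun t =>
      Set.indicator_of_notMem (fun hmem => hxi (by simpa [hij] using hmem i (Set.mem_univ i))) _
    simp [hslice]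

theorem measureReal_univ_pi_update [∀ i, SigmaFinite (μ i)] (S : ∀ i, Set (α i)) (j : ι)
    (T : Set (α j)) :
    (Measure.pi μ).real (Set.univ.pi (update S j T)) =
      (μ j).real T * ∏ i ∈ Finset.univ.erase j, (μ i).real (S i) := by
  simp only [measureReal_def, Measure.pi_pi, ENNReal.toReal_prod]
  simp_rw [apply_update (fun i s => (μ i s).toReal) S j T]
  rw [Finset.prod_update_of_mem (Finset.mem_univ j), Finset.sdiff_singleton_eq_erase]

/-- If `μ j T = 0` both sides vanish, the box being null. -/
theorem setIntegral_div_measureReal_mul [∀ i, IsFiniteMeasure (μ i)] (S : ∀ i, Set (α i))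
    (j : ι) (T : Set (α j)) (f : (∀ i, α i) → ℝ) :
    (∫ x in Set.univ.pi (update S j T), f x ∂Measure.pi μ) /
        (Measure.pi μ).real (Set.univ.pi (update S j T)) * (μ j).real T =
      (∫ x in Set.univ.pi (update S j T), f x ∂Measure.pi μ) /
        ∏ i ∈ Finset.univ.erase j, (μ i).real (S i) := by
  rw [measureReal_univ_pi_update]
  by_cases hT : (μ j).real T = 0
  · have hnull : Measure.pi μ (Set.univ.pi (update S j T)) = 0 := by
      rw [Measure.pi_pi]
      refine Finset.prod_eq_zero (Finset.mem_univ j) ?_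
      simpa [measureReal_eq_zero_iff] using hT
    simp [setIntegral_measure_zero _ hnull]
  · rw [div_mul_eq_mul_div, mul_comm _ ((μ j).real T), mul_div_mul_left _ _ hT]

end PiSlices

def unitQuantile (μ : Measure ℝ) (c : ℝ) : ℝ :=
  sInf {t | t ∈ Set.Icc (0 : ℝ) 1 ∧ c ≤ μ.real (Set.Icc 0 t)}

section Quantile

variable {μ : Measure ℝ}

theorem unitQuantile_zero : unitQuantile μ 0 = 0 := by
  have h : {t | t ∈ Set.Icc (0 : ℝ) 1 ∧ 0 ≤ μ.real (Set.Icc 0 t)} = Set.Icc 0 1 := by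
    ext t; simp [measureReal_nonneg]
  rw [unitQuantile, h, csInf_Icc zero_le_one]

variable [IsFiniteMeasure μ]

theorem measureReal_Ioc_eq_sub {a b : ℝ} (ha : 0 ≤ a) (hab : a ≤ b) :
    μ.real (Set.Ioc a b) = μ.real (Set.Icc 0 b) - μ.real (Set.Icc 0 a) := by
  rw [← Set.Icc_union_Ioc_eq_Icc ha hab,
    measureReal_union ((Set.Iic_disjoint_Ioc le_rfl).mono_left Set.Icc_subset_Iic_self)
      measurableSet_Ioc]
  ring

variable [NullSingletonClass μ]

theorem continuousOn_measureReal_Icc (a b : ℝ) :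
    ContinuousOn (fun t => μ.real (Set.Icc a t)) (Set.Icc a b) := by
  simpa [setIntegral_const] using
    intervalIntegral.continuousOn_primitive_Icc (μ := μ) (a := a) (b := b)
      (integrableOn_const (C := (1 : ℝ)))

/-- Continuity of `t ↦ μ [0, t]` makes the defining set closed, so the infimum `Q` is attained;
the intermediate value theorem on `[0, Q]` then rules out `μ [0, Q] > c`. -/
theorem unitQuantile_spec {c : ℝ} (hc0 : 0 ≤ c) (hc1 : c ≤ μ.real (Set.Icc 0 1)) :
    unitQuantile μ c ∈ Set.Icc 0 1 ∧ μ.real (Set.Icc 0 (unitQuantile μ c)) = c := by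
  set F : ℝ → ℝ := fun t => μ.real (Set.Icc 0 t)
  set S := {t | t ∈ Set.Icc (0 : ℝ) 1 ∧ c ≤ F t}
  change sInf S ∈ _ ∧ F (sInf S) = c
  have hbdd : BddBelow S := ⟨0, fun t ht => ht.1.1⟩
  have hQS : sInf S ∈ S :=
    ((continuousOn_measureReal_Icc 0 1).preimage_isClosed_of_isClosed isClosed_Icc
      isClosed_Ici).csInf_mem ⟨1, ⟨zero_le_one, le_rfl⟩, hc1⟩ hbdd
  refine ⟨hQS.1, le_antisymm ?_ hQS.2⟩
  have hF0 : F 0 = 0 := by simp [F, Measure.real]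
  obtain ⟨t, ht, hFt⟩ := intermediate_value_Icc hQS.1.1
    ((continuousOn_measureReal_Icc 0 1).mono (Set.Icc_subset_Icc_right hQS.1.2))
    ⟨hF0.le.trans hc0, hQS.2⟩
  have hQt : sInf S ≤ t := csInf_le hbdd ⟨⟨ht.1, ht.2.trans hQS.1.2⟩, hFt.ge⟩
  rw [← le_antisymm ht.2 hQt]
  exact hFt.le

end Quantile

theorem mul_sub_le_measureReal_Ioc_of_le_density {μ : Measure ℝ} [IsFiniteMeasure μ]
    {f : ℝ → ENNReal} (hμ : μ = volume.withDensity f) {p a b : ℝ} (hp : 0 ≤ p)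
    (hf : ∀ x ∈ Set.Ioc a b, ENNReal.ofReal p ≤ f x) :
    p * (b - a) ≤ μ.real (Set.Ioc a b) := by
  have h : ENNReal.ofReal (p * (b - a)) ≤ μ (Set.Ioc a b) := by
    rw [hμ, withDensity_apply _ measurableSet_Ioc, ENNReal.ofReal_mul hp, ← Real.volume_Ioc,
      ← setLIntegral_const]
    exact setLIntegral_mono' measurableSet_Ioc hf
  exact (ENNReal.ofReal_le_iff_le_toReal (measure_ne_top _ _)).1 h

def IsIntervalPartition (q : ℕ → ℝ) (I : ℕ → Set ℝ) : Prop :=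
  I 0 = Set.Icc (q 0) (q 1) ∧ ∀ k, 1 ≤ k → I k = Set.Ioc (q k) (q (k + 1))

namespace IsIntervalPartition

variable {q : ℕ → ℝ} {I : ℕ → Set ℝ}

theorem subset_Icc (hI : IsIntervalPartition q I) (k : ℕ) : I k ⊆ Set.Icc (q k) (q (k + 1)) := by
  rcases Nat.eq_zero_or_pos k with rfl | hk
  · exact hI.1.le
  · rw [hI.2 k hk]
    exact Set.Ioc_subset_Icc_self

theorem measurableSet (hI : IsIntervalPartition q I) (k : ℕ) : MeasurableSet (I k) := by
  rcases Nat.eq_zero_or_pos k with rfl | hk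
  · rw [hI.1]
    exact measurableSet_Icc
  · rw [hI.2 k hk]
    exact measurableSet_Ioc

theorem ae_eq_Ioc (hI : IsIntervalPartition q I) (μ : Measure ℝ) [NullSingletonClass μ] (k : ℕ) :
    I k =ᵐ[μ] Set.Ioc (q k) (q (k + 1)) := by
  rcases Nat.eq_zero_or_pos k with rfl | hk
  · rw [hI.1]
    exact Ioc_ae_eq_Icc.symm
  · rw [hI.2 k hk]
    exact Filter.EventuallyEq.rfl

theorem pairwiseDisjoint (hI : IsIntervalPartition q I) {n : ℕ} (hq : MonotoneOn q (Set.Iic n)) :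
    (↑(Finset.range n) : Set ℕ).PairwiseDisjoint I := by
  have hlt : ∀ k l, k < l → l < n → Disjoint (I k) (I l) := fun k l hkl hl =>
    Set.disjoint_left.2 fun x hxk hxl => by
      have hq' : q (k + 1) ≤ q l :=
        hq (Set.mem_Iic.2 (by omega)) (Set.mem_Iic.2 hl.le) (by omega)
      rw [hI.2 l (by omega)] at hxl
      linarith [(hI.subset_Icc k hxk).2, hxl.1]
  intro k hk l hl hkl
  rw [Finset.coe_range, Set.mem_Iio] at hk hl
  rcases hkl.lt_or_gt with h | h
  · exact hlt k l h hl
  · exact (hlt l k h hk).symm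

theorem exists_mem_of_mem_Icc (hI : IsIntervalPartition q I) {n : ℕ} (hn : 1 ≤ n) {x : ℝ}
    (hx : x ∈ Set.Icc (q 0) (q n)) : ∃ k < n, x ∈ I k := by
  induction n, hn using Nat.le_induction with
  | base => exact ⟨0, one_pos, hI.1 ▸ hx⟩
  | succ n hn ih =>
    by_cases hxn : x ≤ q n
    · obtain ⟨k, hk, hxk⟩ := ih ⟨hx.1, hxn⟩
      exact ⟨k, hk.trans n.lt_succ_self, hxk⟩
    · exact ⟨n, n.lt_succ_self, (hI.2 n hn).symm ▸ ⟨not_le.1 hxn, hx.2⟩⟩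

end IsIntervalPartition

def IsEqualProbQuantiles (μ : Measure ℝ) (r : ℕ) (q : ℕ → ℝ) : Prop :=
  ∀ ℓ ≤ r, q ℓ = unitQuantile μ (ℓ / r)

namespace IsEqualProbQuantiles

variable {μ : Measure ℝ} {r : ℕ} {q : ℕ → ℝ}

theorem apply_zero (hq : IsEqualProbQuantiles μ r q) : q 0 = 0 := by
  rw [hq 0 r.zero_le, Nat.cast_zero, zero_div, unitQuantile_zero]

variable [IsFiniteMeasure μ] [NullSingletonClass μ]

theorem mem_Icc_and_measureReal_Icc (hq : IsEqualProbQuantiles μ r q)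
    (hμ : μ (Set.Icc 0 1) = 1) {ℓ : ℕ} (hℓ : ℓ ≤ r) :
    q ℓ ∈ Set.Icc 0 1 ∧ μ.real (Set.Icc 0 (q ℓ)) = ℓ / r := by
  rw [hq ℓ hℓ]
  refine unitQuantile_spec (by positivity) ?_
  rw [measureReal_def, hμ, ENNReal.toReal_one]
  exact div_le_one_of_le₀ (by exact_mod_cast hℓ) r.cast_nonneg

theorem mem_Icc (hq : IsEqualProbQuantiles μ r q) (hμ : μ (Set.Icc 0 1) = 1) {ℓ : ℕ}
    (hℓ : ℓ ≤ r) : q ℓ ∈ Set.Icc 0 1 :=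
  (hq.mem_Icc_and_measureReal_Icc hμ hℓ).1

theorem measureReal_Icc (hq : IsEqualProbQuantiles μ r q) (hμ : μ (Set.Icc 0 1) = 1) {ℓ : ℕ}
    (hℓ : ℓ ≤ r) : μ.real (Set.Icc 0 (q ℓ)) = ℓ / r :=
  (hq.mem_Icc_and_measureReal_Icc hμ hℓ).2

theorem monotoneOn (hq : IsEqualProbQuantiles μ r q) (hμ : μ (Set.Icc 0 1) = 1) :
    MonotoneOn q (Set.Iic r) := by
  intro k hk l hl hkl
  rcases hkl.eq_or_lt with rfl | hlt
  · exact le_rfl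
  by_contra h
  have hF : μ.real (Set.Icc 0 (q l)) ≤ μ.real (Set.Icc 0 (q k)) :=
    measureReal_mono (Set.Icc_subset_Icc_right (not_le.1 h).le)
  rw [hq.measureReal_Icc hμ hk, hq.measureReal_Icc hμ hl] at hF
  have hr : (0 : ℝ) < r := by exact_mod_cast (k.zero_le.trans_lt hlt).trans_le hl
  exact (div_lt_div_of_pos_right (by exact_mod_cast hlt) hr).not_ge hF

theorem measureReal_Ioc (hq : IsEqualProbQuantiles μ r q) (hμ : μ (Set.Icc 0 1) = 1) {k : ℕ}
    (hk : k < r) : μ.real (Set.Ioc (q k) (q (k + 1))) = 1 / r := by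
  rw [measureReal_Ioc_eq_sub (hq.mem_Icc hμ hk.le).1
      (hq.monotoneOn hμ (Set.mem_Iic.2 hk.le) (Set.mem_Iic.2 hk) k.le_succ),
    hq.measureReal_Icc hμ hk, hq.measureReal_Icc hμ hk.le]
  push_cast
  ring

variable {pL : ℝ}

/-- The density bound `pL` forbids `μ` from putting zero mass on `(q r, 1]`. -/
theorem apply_eq_one (hq : IsEqualProbQuantiles μ r q) (hμ : μ (Set.Icc 0 1) = 1) (hr : 1 ≤ r)
    (hpL : 0 < pL)
    (hmass : ∀ a b, 0 ≤ a → b ≤ 1 → pL * (b - a) ≤ μ.real (Set.Ioc a b)) : q r = 1 := by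
  have hqr := hq.mem_Icc hμ le_rfl
  have h := hmass (q r) 1 hqr.1 le_rfl
  rw [measureReal_Ioc_eq_sub hqr.1 hqr.2, hq.measureReal_Icc hμ le_rfl, measureReal_def, hμ,
    ENNReal.toReal_one, div_self (by positivity), sub_self] at h
  exact le_antisymm hqr.2 (by nlinarith)

theorem sub_le (hq : IsEqualProbQuantiles μ r q) (hμ : μ (Set.Icc 0 1) = 1) (hpL : 0 < pL)
    (hmass : ∀ a b, 0 ≤ a → b ≤ 1 → pL * (b - a) ≤ μ.real (Set.Ioc a b)) {k : ℕ} (hk : k < r) :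
    q (k + 1) - q k ≤ 1 / (r * pL) := by
  have h := hmass (q k) (q (k + 1)) (hq.mem_Icc hμ hk.le).1 (hq.mem_Icc hμ hk).2
  rw [hq.measureReal_Ioc hμ hk] at h
  rw [← div_div, le_div_iff₀ hpL, mul_comm]
  exact h

variable {I : ℕ → Set ℝ}

theorem measureReal_cell (hq : IsEqualProbQuantiles μ r q) (hμ : μ (Set.Icc 0 1) = 1)
    (hI : IsIntervalPartition q I) {k : ℕ} (hk : k < r) : μ.real (I k) = 1 / r := by
  rw [measureReal_congr (hI.ae_eq_Ioc μ k)]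
  exact hq.measureReal_Ioc hμ hk

theorem cell_subset_Icc (hq : IsEqualProbQuantiles μ r q) (hμ : μ (Set.Icc 0 1) = 1)
    (hI : IsIntervalPartition q I) {k : ℕ} (hk : k < r) : I k ⊆ Set.Icc 0 1 :=
  (hI.subset_Icc k).trans (Set.Icc_subset_Icc (hq.mem_Icc hμ hk.le).1 (hq.mem_Icc hμ hk).2)

theorem biUnion_cell (hq : IsEqualProbQuantiles μ r q) (hμ : μ (Set.Icc 0 1) = 1)
    (hI : IsIntervalPartition q I) (hr : 1 ≤ r) (hpL : 0 < pL)
    (hmass : ∀ a b, 0 ≤ a → b ≤ 1 → pL * (b - a) ≤ μ.real (Set.Ioc a b)) :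
    ⋃ k ∈ Finset.range r, I k = Set.Icc 0 1 := by
  refine subset_antisymm
    (Set.iUnion₂_subset fun k hk => hq.cell_subset_Icc hμ hI (Finset.mem_range.1 hk)) ?_
  intro x hx
  rw [← hq.apply_zero, ← hq.apply_eq_one hμ hr hpL hmass] at hx
  obtain ⟨k, hk, hxk⟩ := hI.exists_mem_of_mem_Icc hr hx
  exact Set.mem_biUnion (Finset.mem_range.2 hk) hxk

theorem abs_sub_le_of_mem_cell (hq : IsEqualProbQuantiles μ r q) (hμ : μ (Set.Icc 0 1) = 1)
    (hI : IsIntervalPartition q I) (hpL : 0 < pL)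
    (hmass : ∀ a b, 0 ≤ a → b ≤ 1 → pL * (b - a) ≤ μ.real (Set.Ioc a b)) {k : ℕ} (hk : k < r)
    {x y : ℝ} (hx : x ∈ I k) (hy : y ∈ I k) : |x - y| ≤ 1 / (r * pL) := by
  have h := hq.sub_le hμ hpL hmass hk
  have hx' := hI.subset_Icc k hx
  have hy' := hI.subset_Icc k hy
  rw [abs_le]
  constructor <;> linarith [hx'.1, hx'.2, hy'.1, hy'.2]

end IsEqualProbQuantiles

section Holder

variable {ι : Type*} [Fintype ι]

theorem sqrt_sum_sq_sub_le {x y : ι → ℝ} {δ : ℝ} (hδ : 0 ≤ δ) (hxy : ∀ i, |x i - y i| ≤ δ) :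
    √(∑ i, (x i - y i) ^ 2) ≤ √(Fintype.card ι) * δ := by
  calc √(∑ i, (x i - y i) ^ 2) ≤ √(∑ _i : ι, δ ^ 2) :=
        Real.sqrt_le_sqrt (Finset.sum_le_sum fun i _ => sq_le_sq' (abs_le.1 (hxy i)).1
          (abs_le.1 (hxy i)).2)
    _ = √(Fintype.card ι) * δ := by
        rw [Finset.sum_const, Finset.card_univ, nsmul_eq_mul, Real.sqrt_mul (Nat.cast_nonneg _),
          Real.sqrt_sq hδ]

theorem le_of_le_holder_of_abs_sub_le {x y : ι → ℝ} {u H α δ : ℝ} (hH : 0 ≤ H) (hα : 0 ≤ α)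
    (hδ : 0 ≤ δ) (hu : u ≤ H * √(∑ i, (x i - y i) ^ 2) ^ α) (hxy : ∀ i, |x i - y i| ≤ δ) :
    u ≤ H * (√(Fintype.card ι) * δ) ^ α :=
  hu.trans (mul_le_mul_of_nonneg_left
    (Real.rpow_le_rpow (Real.sqrt_nonneg _) (sqrt_sum_sq_sub_le hδ hxy) hα) hH)

theorem integrableOn_unitCube_of_holder (μ : Measure (ι → ℝ)) [IsFiniteMeasure μ]
    {g : (ι → ℝ) → ℝ} (hg : Measurable g) {H α : ℝ} (hH : 0 ≤ H) (hα : 0 ≤ α)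
    (hHolder : ∀ x y : ι → ℝ, (∀ j, x j ∈ Set.Icc (0 : ℝ) 1) → (∀ j, y j ∈ Set.Icc (0 : ℝ) 1) →
      |g x - g y| ≤ H * (√(∑ j, (x j - y j) ^ 2)) ^ α) :
    IntegrableOn g (Set.univ.pi fun _ => Set.Icc 0 1) μ := by
  have h0 : ∀ j, (0 : ι → ℝ) j ∈ Set.Icc (0 : ℝ) 1 := fun _ => ⟨le_rfl, zero_le_one⟩
  refine Measure.integrableOn_of_bounded (M := |g 0| + H * (√(Fintype.card ι) * 1) ^ α)
    (measure_ne_top _ _) hg.aestronglyMeasurable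
    (ae_restrict_of_forall_mem (MeasurableSet.univ_pi fun _ => measurableSet_Icc) fun y hy => ?_)
  have hy' : ∀ j, y j ∈ Set.Icc (0 : ℝ) 1 := Set.mem_univ_pi.1 hy
  have hdiff : |g y - g 0| ≤ H * (√(Fintype.card ι) * 1) ^ α :=
    le_of_le_holder_of_abs_sub_le hH hα zero_le_one (hHolder y 0 hy' h0) fun j => by
      rw [Pi.zero_apply, sub_zero, abs_le]
      exact ⟨by linarith [(hy' j).1], (hy' j).2⟩
  rw [Real.norm_eq_abs]
  linarith [abs_sub_abs_le_abs_sub (g y) (g 0)]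

end Holder

theorem abs_sub_setIntegral_div_le {X : Type*} [MeasurableSpace X] {μ : Measure X} {s : Set X}
    (hs : μ.real s ≠ 0) {g : X → ℝ} (hg : IntegrableOn g s μ) {c K : ℝ}
    (h : ∀ y ∈ s, |c - g y| ≤ K) :
    |c - (∫ y in s, g y ∂μ) / μ.real s| ≤ K := by
  have hfin : μ s < ⊤ := (ENNReal.toReal_ne_zero.1 hs).2.lt_top
  have hpos : 0 < μ.real s := lt_of_le_of_ne measureReal_nonneg (Ne.symm hs)
  have hmean : c - (∫ y in s, g y ∂μ) / μ.real s = (∫ y in s, (c - g y) ∂μ) / μ.real s := by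
    rw [integral_sub (integrableOn_const (C := c) hfin.ne) hg, setIntegral_const, smul_eq_mul]
    field_simp
  rw [hmean, abs_div, abs_of_pos hpos, div_le_iff₀ hpos]
  simpa using norm_setIntegral_le_of_norm_le_const hfin fun y hy =>
    (Real.norm_eq_abs _).trans_le (h y hy)

section Slab

variable {ι : Type*} [DecidableEq ι] {α : ι → Type*}

theorem biUnion_univ_pi_update {κ : Type*} (t : Finset κ) (S : ∀ i, Set (α i)) (j : ι)
    (T : κ → Set (α j)) :
    ⋃ k ∈ t, Set.univ.pi (update S j (T k)) = Set.univ.pi (update S j (⋃ k ∈ t, T k)) := by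
  ext x
  simp only [Set.mem_iUnion, Set.mem_univ_pi, exists_prop]
  constructor
  · rintro ⟨k, hk, hx⟩ i
    rcases eq_or_ne i j with rfl | hi
    · simpa using ⟨k, hk, by simpa using hx i⟩
    · simpa [hi] using hx i
  · intro hx
    obtain ⟨k, hk, hxk⟩ : ∃ k ∈ t, x j ∈ T k := by simpa using hx j
    refine ⟨k, hk, fun i => ?_⟩
    rcases eq_or_ne i j with rfl | hi
    · simpa using hxk
    · simpa [hi] using hx i

theorem pairwiseDisjoint_univ_pi_update {κ : Type*} {t : Set κ} (S : ∀ i, Set (α i)) (j : ι)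
    {T : κ → Set (α j)} (hT : t.PairwiseDisjoint T) :
    t.PairwiseDisjoint fun k => Set.univ.pi (update S j (T k)) := by
  intro k hk l hl hkl
  refine Set.disjoint_univ_pi.2 ⟨j, ?_⟩
  simpa only [update_self] using hT hk hl hkl

variable [Fintype ι]

theorem setIntegral_slab_eq_zero (P : ι → Measure ℝ) [∀ i, IsProbabilityMeasure (P i)]
    {S : ι → Set ℝ} (hS : ∀ i, MeasurableSet (S i)) {j : ι} (hSsub : ∀ i ≠ j, S i ⊆ Set.Icc 0 1)
    (hsupp : P j (Set.Icc 0 1) = 1) {g : (ι → ℝ) → ℝ}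
    (hg : IntegrableOn g (Set.univ.pi (update S j (Set.Icc 0 1))) (Measure.pi P))
    (hident : ∀ x : ι → ℝ, (∀ k, x k ∈ Set.Icc (0 : ℝ) 1) → ∫ t, g (update x j t) ∂(P j) = 0) :
    ∫ x in Set.univ.pi (update S j (Set.Icc 0 1)), g x ∂Measure.pi P = 0 := by
  have hmeas : ∀ i, MeasurableSet (update S j (Set.Icc 0 1) i) := fun i => by
    rcases eq_or_ne i j with rfl | hi
    · simp
    · simpa [hi] using hS i
  have hP : (P j).restrict (Set.Icc 0 1) = P j :=
    Measure.restrict_eq_self_of_ae_mem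
      (mem_ae_iff.2 ((prob_compl_eq_zero_iff measurableSet_Icc).2 hsupp))
  refine setIntegral_univ_pi_eq_zero_of_setIntegral_update P j hmeas hg fun x hx => ?_
  have hx0 : ∀ i, update x j 0 i ∈ Set.Icc (0 : ℝ) 1 := fun i => by
    rcases eq_or_ne i j with rfl | hi
    · simp
    · simpa [hi] using hSsub i hi (by simpa [hi] using hx i hi)
  simpa [hP, update_idem] using hident _ hx0

end Slab

theorem sum_setIntegral_div_mul_measureReal_eq_zero {ι : Type*} [Fintype ι] [DecidableEq ι]
    (P : ι → Measure ℝ) [∀ i, IsProbabilityMeasure (P i)] {I : ι → ℕ → Set ℝ}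
    (hI : ∀ i k, MeasurableSet (I i k)) {j : ι} {n : ℕ}
    (hdisj : (↑(Finset.range n) : Set ℕ).PairwiseDisjoint (I j))
    (hcover : ⋃ k ∈ Finset.range n, I j k = Set.Icc 0 1) (hsupp : P j (Set.Icc 0 1) = 1)
    {𝓵 : ι → ℕ} (h𝓵 : ∀ i ≠ j, I i (𝓵 i) ⊆ Set.Icc 0 1) {g : (ι → ℝ) → ℝ}
    (hg : IntegrableOn g (Set.univ.pi fun _ => Set.Icc 0 1) (Measure.pi P))
    (hident : ∀ x : ι → ℝ, (∀ k, x k ∈ Set.Icc (0 : ℝ) 1) → ∫ t, g (update x j t) ∂(P j) = 0) :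
    ∑ k ∈ Finset.range n,
      (∫ x in Set.univ.pi (fun i => I i (update 𝓵 j k i)), g x ∂Measure.pi P) /
        (Measure.pi P).real (Set.univ.pi fun i => I i (update 𝓵 j k i)) *
          (P j).real (I j k) = 0 := by
  set S : ι → Set ℝ := fun i => I i (𝓵 i)
  have hbox : ∀ k, (fun i => I i (update 𝓵 j k i)) = update S j (I j k) :=
    fun k => funext (apply_update (fun i => I i) 𝓵 j k)
  have hslab := biUnion_univ_pi_update (Finset.range n) S j (I j)
  rw [hcover] at hslab
  have hg' : IntegrableOn g (Set.univ.pi (update S j (Set.Icc 0 1))) (Measure.pi P) :=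
    hg.mono_set (Set.pi_mono fun i _ => by
      rcases eq_or_ne i j with rfl | hi
      · simp
      · simpa [hi, S] using h𝓵 i hi)
  simp_rw [hbox, setIntegral_div_measureReal_mul, ← Finset.sum_div]
  rw [← integral_biUnion_finset _
      (fun k _ => MeasurableSet.univ_pi fun i => hbox k ▸ hI i (update 𝓵 j k i))
      (pairwiseDisjoint_univ_pi_update S j hdisj)
      (fun k hk => hg'.mono_set (hslab ▸ Set.subset_iUnion₂_of_subset k hk subset_rfl)),
    hslab, setIntegral_slab_eq_zero P (fun i => hI i (𝓵 i)) h𝓵 hsupp hg' hident, zero_div]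

theorem abs_sub_treeFun_le_of_holder {ι : Type*} [Fintype ι] [DecidableEq ι]
    (P : ι → Measure ℝ) [∀ i, SigmaFinite (P i)] {φ : ι → ℕ} {I : ι → ℕ → Set ℝ}
    (hdisj : ∀ j, (↑(Finset.range (φ j)) : Set ℕ).PairwiseDisjoint (I j))
    (hsub : ∀ j, ∀ k < φ j, I j k ⊆ Set.Icc 0 1)
    (hpos : ∀ j, ∀ k < φ j, (P j).real (I j k) ≠ 0) {δ : ℝ} (hδ : 0 ≤ δ)
    (hdiam : ∀ j, ∀ k < φ j, ∀ a ∈ I j k, ∀ b ∈ I j k, |a - b| ≤ δ)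
    {g : (ι → ℝ) → ℝ} (hg : IntegrableOn g (Set.univ.pi fun _ => Set.Icc 0 1) (Measure.pi P))
    {H α : ℝ} (hH : 0 ≤ H) (hα : 0 ≤ α)
    (hHolder : ∀ x y : ι → ℝ, (∀ j, x j ∈ Set.Icc (0 : ℝ) 1) → (∀ j, y j ∈ Set.Icc (0 : ℝ) 1) →
      |g x - g y| ≤ H * (√(∑ j, (x j - y j) ^ 2)) ^ α)
    {γ : (ι → ℕ) → ℝ} (hγ : ∀ 𝓵 : ι → ℕ, γ 𝓵 =
      (∫ x in Set.univ.pi (fun j => I j (𝓵 j)), g x ∂(Measure.pi P)) /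
        (Measure.pi P).real (Set.univ.pi fun j => I j (𝓵 j)))
    {x : ι → ℝ} {𝓵 : ι → ℕ} (h𝓵 : ∀ j, 𝓵 j < φ j) (hx : ∀ j, x j ∈ I j (𝓵 j)) :
    |g x - treeFun φ I γ x| ≤ H * (√(Fintype.card ι) * δ) ^ α := by
  have hC : (Measure.pi P).real (Set.univ.pi fun j => I j (𝓵 j)) ≠ 0 := by
    rw [measureReal_def, Measure.pi_pi, ENNReal.toReal_prod]
    exact Finset.prod_ne_zero_iff.2 fun j _ => hpos j _ (h𝓵 j)
  rw [treeFun_eq_of_mem hdisj γ h𝓵 hx, hγ]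
  refine abs_sub_setIntegral_div_le hC (hg.mono_set (Set.pi_mono fun j _ => hsub j _ (h𝓵 j)))
    fun y hy => ?_
  have hy' : ∀ j, y j ∈ I j (𝓵 j) := Set.mem_univ_pi.1 hy
  exact le_of_le_holder_of_abs_sub_le hH hα hδ
    (hHolder x y (fun j => hsub j _ (h𝓵 j) (hx j)) fun j => hsub j _ (h𝓵 j) (hy' j))
    fun j => hdiam j _ (h𝓵 j) _ (hx j) _ (hy' j)

theorem stmt6_general {ι : Type*} [Fintype ι] [DecidableEq ι]
    (P : ι → Measure ℝ) [∀ j, IsProbabilityMeasure (P j)]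
    (dens : ι → ℝ → ENNReal) (pL : ℝ) (hpL : 0 < pL)
    (hdens : ∀ j, P j = MeasureTheory.volume.withDensity (dens j))
    (hlow : ∀ j, ∀ x ∈ Set.Icc (0 : ℝ) 1, ENNReal.ofReal pL ≤ dens j x)
    (hsupp : ∀ j, P j (Set.Icc (0 : ℝ) 1) = 1)
    (r : ℕ) (hr : 1 ≤ r)
    -- the `ℓ/r`-quantiles of each marginal
    (q : ι → ℕ → ℝ)
    (hq : ∀ j, ∀ ℓ ≤ r, q j ℓ =
      sInf {t | t ∈ Set.Icc (0 : ℝ) 1 ∧ (ℓ : ℝ) / r ≤ (P j (Set.Icc 0 t)).toReal})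
    -- the equal-probability partition determined by the quantiles
    (I : ι → ℕ → Set ℝ)
    (hI0 : ∀ j, I j 0 = Set.Icc (q j 0) (q j 1))
    (hI : ∀ j, ∀ k, 1 ≤ k → I j k = Set.Ioc (q j k) (q j (k + 1)))
    -- the α-Hölder, identifiable target function
    (g : (ι → ℝ) → ℝ) (hgm : Measurable g)
    (α H : ℝ) (hα : 0 < α) (hH : 0 ≤ H)
    (hHolder : ∀ x y : ι → ℝ, (∀ j, x j ∈ Set.Icc (0 : ℝ) 1) →
        (∀ j, y j ∈ Set.Icc (0 : ℝ) 1) →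
        |g x - g y| ≤ H * (Real.sqrt (∑ j, (x j - y j) ^ 2)) ^ α)
    (hident : ∀ j : ι, ∀ x : ι → ℝ, (∀ k, x k ∈ Set.Icc (0 : ℝ) 1) →
        ∫ t, g (Function.update x j t) ∂(P j) = 0)
    -- heights: conditional means of `g` over the product cells
    (γ : (ι → ℕ) → ℝ)
    (hγ : ∀ 𝓵 : ι → ℕ, γ 𝓵 =
      (∫ x in Set.univ.pi (fun j => I j (𝓵 j)), g x ∂(Measure.pi P)) /
        ((Measure.pi P) (Set.univ.pi fun j => I j (𝓵 j))).toReal) :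
    -- (i) the heights satisfy the populational identifiability condition
    (∀ j : ι, ∀ 𝓵 ∈ Fintype.piFinset (fun _ : ι => Finset.range r),
        ∑ k ∈ Finset.range r,
          γ (Function.update 𝓵 j k) * (P j (I j k)).toReal = 0) ∧
    -- (ii) uniform approximation on the unit cube
    (∀ x : ι → ℝ, (∀ j, x j ∈ Set.Icc (0 : ℝ) 1) →
        |g x - treeFun (fun _ : ι => r) I γ x| ≤
          H * (Real.sqrt (Fintype.card ι) / (r * pL)) ^ α) := by
  have : ∀ j, NullSingletonClass (P j) := fun j => hdens j ▸ inferInstance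
  have hmass : ∀ j a b, 0 ≤ a → b ≤ 1 → pL * (b - a) ≤ (P j).real (Set.Ioc a b) :=
    fun j a b ha hb => mul_sub_le_measureReal_Ioc_of_le_density (hdens j) hpL.le
      fun x hx => hlow j x ⟨ha.trans hx.1.le, hx.2.trans hb⟩
  have hquant : ∀ j, IsEqualProbQuantiles (P j) r (q j) := hq
  have hpart : ∀ j, IsIntervalPartition (q j) (I j) := fun j => ⟨hI0 j, hI j⟩
  have hcell : ∀ j, ∀ k < r, I j k ⊆ Set.Icc 0 1 := fun j k =>
    (hquant j).cell_subset_Icc (hsupp j) (hpart j)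
  have hdisj : ∀ j, (↑(Finset.range r) : Set ℕ).PairwiseDisjoint (I j) := fun j =>
    (hpart j).pairwiseDisjoint ((hquant j).monotoneOn (hsupp j))
  have hcover : ∀ j, ⋃ k ∈ Finset.range r, I j k = Set.Icc 0 1 := fun j =>
    (hquant j).biUnion_cell (hsupp j) (hpart j) hr hpL (hmass j)
  have hg : IntegrableOn g (Set.univ.pi fun _ => Set.Icc 0 1) (Measure.pi P) :=
    integrableOn_unitCube_of_holder _ hgm hH hα.le hHolder
  refine ⟨fun j 𝓵 h𝓵 => ?_, fun x hx => ?_⟩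
  · simp_rw [hγ]
    exact sum_setIntegral_div_mul_measureReal_eq_zero P (fun i => (hpart i).measurableSet)
      (hdisj j) (hcover j) (hsupp j)
      (fun i _ => hcell i _ (Finset.mem_range.1 (Fintype.mem_piFinset.1 h𝓵 i))) hg (hident j)
  · choose 𝓵 h𝓵 hx𝓵 using fun j => Set.mem_iUnion₂.1 ((hcover j).ge (hx j))
    rw [← mul_one_div]
    exact abs_sub_treeFun_le_of_holder P hdisj hcell
      (fun j k hk => by rw [(hquant j).measureReal_cell (hsupp j) (hpart j) hk]; positivity)
      (by positivity)
      (fun j k hk a ha b hb =>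
        (hquant j).abs_sub_le_of_mem_cell (hsupp j) (hpart j) hpL (hmass j) hk ha hb)
      hg hH hα.le hHolder hγ (fun j => Finset.mem_range.1 (h𝓵 j)) hx𝓵

/-- the equal-probability product tree, whose heights are the conditional
means of an α-Hölder, `ℙ^ind`-identifiable function `g` over the quantile product cells,
is itself `ℙ^ind`-identifiable and approximates `g` uniformly on `[0,1]^d` with error at
most `‖g‖_{H^α} (√d/(r p_L))^α`. -/
theorem stmt6 {ι : Type*} [Fintype ι] [DecidableEq ι]
    (P : ι → Measure ℝ) [∀ j, IsProbabilityMeasure (P j)]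
    (dens : ι → ℝ → ENNReal) (pL : ℝ) (hpL : 0 < pL)
    (hdens : ∀ j, P j = MeasureTheory.volume.withDensity (dens j))
    (hlow : ∀ j, ∀ x ∈ Set.Icc (0 : ℝ) 1, ENNReal.ofReal pL ≤ dens j x)
    (hsupp : ∀ j, P j (Set.Icc (0 : ℝ) 1) = 1)
    (r : ℕ) (hr : 1 ≤ r)
    -- the `ℓ/r`-quantiles of each marginal
    (q : ι → ℕ → ℝ)
    (hq : ∀ j, ∀ ℓ ≤ r, q j ℓ =
      sInf {t | t ∈ Set.Icc (0 : ℝ) 1 ∧ (ℓ : ℝ) / r ≤ (P j (Set.Icc 0 t)).toReal})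
    -- the equal-probability partition determined by the quantiles
    (I : ι → ℕ → Set ℝ)
    (hI0 : ∀ j, I j 0 = Set.Icc (q j 0) (q j 1))
    (hI : ∀ j, ∀ k, 1 ≤ k → I j k = Set.Ioc (q j k) (q j (k + 1)))
    -- the α-Hölder, identifiable target function
    (g : (ι → ℝ) → ℝ) (hgm : Measurable g)
    (α H : ℝ) (hα : 0 < α) (hα1 : α ≤ 1) (hH : 0 ≤ H)
    (hHolder : ∀ x y : ι → ℝ, (∀ j, x j ∈ Set.Icc (0 : ℝ) 1) →
        (∀ j, y j ∈ Set.Icc (0 : ℝ) 1) →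
        |g x - g y| ≤ H * (Real.sqrt (∑ j, (x j - y j) ^ 2)) ^ α)
    (hident : ∀ j : ι, ∀ x : ι → ℝ, (∀ k, x k ∈ Set.Icc (0 : ℝ) 1) →
        ∫ t, g (Function.update x j t) ∂(P j) = 0)
    -- heights: conditional means of `g` over the product cells
    (γ : (ι → ℕ) → ℝ)
    (hγ : ∀ 𝓵 : ι → ℕ, γ 𝓵 =
      (∫ x in Set.univ.pi (fun j => I j (𝓵 j)), g x ∂(Measure.pi P)) /
        ((Measure.pi P) (Set.univ.pi fun j => I j (𝓵 j))).toReal) :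
    -- (i) the heights satisfy the populational identifiability condition
    (∀ j : ι, ∀ 𝓵 ∈ Fintype.piFinset (fun _ : ι => Finset.range r),
        ∑ k ∈ Finset.range r,
          γ (Function.update 𝓵 j k) * (P j (I j k)).toReal = 0) ∧
    -- (ii) uniform approximation on the unit cube
    (∀ x : ι → ℝ, (∀ j, x j ∈ Set.Icc (0 : ℝ) 1) →
        |g x - treeFun (fun _ : ι => r) I γ x| ≤
          H * (Real.sqrt (Fintype.card ι) / (r * pL)) ^ α) :=
  stmt6_general P dens pL hpL hdens hlow hsupp r hr q hq I hI0 hI g hgm α H hα hH hHolder hident γ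
    hγ
end
end

section
/- Let ℙ be a Borel probability measure on [0,1]^p with density p_X (with respect to Lebesgue measure), let ℙ_j be its marginals with densities p_j, and let p^ind(x) = ∏_{j=1}^p p_j(x_j). Suppose there exist constants 0 < C_L ≤ C_U < ∞ with C_L ≤ p_X(x)/p^ind(x) ≤ C_U for all x ∈ [0,1]^p. For each S ⊆ {1,…,p}, let g_S be a bounded measurable function depending only on x_S and satisfying the ℙ^ind-identifiability condition (for every j ∈ S, ∫ g_S dℙ_j = 0 for almost every value of the remaining coordinates of S), where ℙ^ind = ⊗_j ℙ_j. Then for every S₀ ⊆ {1,…,p}, ‖Σ_{S ⊆ {1,…,p}} g_S‖²_{L²(ℙ)} ≥ (C_L / C_U) ‖g_{S₀}‖²_{L²(ℙ)}. -/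
/-!
Write `ν = ⊗ⱼ ℙⱼ`. The identifiability condition makes the components pairwise orthogonal in
`L²(ν)`: if `j ∈ S \ T`, then `g_T` does not depend on `x_j`, and integrating `g_S g_T` first in
`x_j` against `ℙⱼ` gives zero. Hence `‖∑_S g_S‖²_{L²(ν)} = ∑_S ‖g_S‖²_{L²(ν)} ≥ ‖g_{S₀}‖²_{L²(ν)}`.
Since `ν` has density `p^ind` and is concentrated on the cube, the density bounds give
`C_L ν ≤ ℙ ≤ C_U ν` as measures, which transfers the inequality to `L²(ℙ)` at the cost of `C_L/C_U`.
-/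

open MeasureTheory
open scoped ENNReal

namespace MeasureTheory

theorem lintegral_fin_nat_prod_eq_prod {n : ℕ} {E : Type*} [MeasurableSpace E]
    (μ : Fin n → Measure E) [∀ i, SigmaFinite (μ i)]
    {f : Fin n → E → ℝ≥0∞} (hf : ∀ i, Measurable (f i)) :
    ∫⁻ x, ∏ i, f i (x i) ∂Measure.pi μ = ∏ i, ∫⁻ x, f i x ∂μ i := by
  induction n with
  | zero => simp
  | succ n ih =>
      calc
        _ = ∫⁻ x : E × (Fin n → E), f 0 x.1 * ∏ i : Fin n, f i.succ (x.2 i)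
            ∂(μ 0).prod (Measure.pi fun i ↦ μ i.succ) := by
          rw [← ((measurePreserving_piFinSuccAbove μ 0).symm).lintegral_comp_emb
            (MeasurableEquiv.measurableEmbedding _)]
          simp_rw [MeasurableEquiv.piFinSuccAbove_symm_apply, Fin.insertNthEquiv,
            Fin.prod_univ_succ, Fin.insertNth_zero, Equiv.coe_fn_mk, Fin.cons_succ,
            Fin.zero_succAbove, cast_eq, Fin.cons_zero]
        _ = (∫⁻ x, f 0 x ∂μ 0) * ∏ i : Fin n, ∫⁻ x, f i.succ x ∂μ i.succ := by
          rw [← ih _ fun i ↦ hf i.succ, ← lintegral_prod_mul (hf 0).aemeasurable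
            (Finset.measurable_prod _ fun i _ ↦
              (hf i.succ).comp (measurable_pi_apply i)).aemeasurable]
        _ = ∏ i, ∫⁻ x, f i x ∂μ i := by rw [Fin.prod_univ_succ]

theorem Measure.pi_withDensity {n : ℕ} {E : Type*} [MeasurableSpace E]
    (μ : Fin n → Measure E) [∀ i, SigmaFinite (μ i)]
    {f : Fin n → E → ℝ≥0∞} (hf : ∀ i, Measurable (f i))
    [∀ i, SigmaFinite ((μ i).withDensity (f i))] :
    Measure.pi (fun i ↦ (μ i).withDensity (f i))
      = (Measure.pi μ).withDensity fun x ↦ ∏ i, f i (x i) := by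
  refine Measure.pi_eq fun s hs ↦ ?_
  have hind : (Set.univ.pi s).indicator (fun x ↦ ∏ i, f i (x i))
      = fun x ↦ ∏ i, (s i).indicator (f i) (x i) := by
    funext x
    classical
    simp [Set.indicator_apply, Finset.prod_ite_zero]
  rw [withDensity_apply _ (MeasurableSet.univ_pi hs), ← lintegral_indicator
    (MeasurableSet.univ_pi hs), hind,
    lintegral_fin_nat_prod_eq_prod μ fun i ↦ (hf i).indicator (hs i)]
  simp_rw [lintegral_indicator (hs _), withDensity_apply _ (hs _)]

section Update

variable {ι : Type*} [Fintype ι] [DecidableEq ι] {X : ι → Type*} [∀ i, MeasurableSpace (X i)]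
  (μ : (i : ι) → Measure (X i)) [∀ i, SigmaFinite (μ i)]

theorem Measure.map_update_prod_pi (j : ι) [IsProbabilityMeasure (μ j)] :
    ((Measure.pi μ).prod (μ j)).map (fun q ↦ Function.update q.1 j q.2) = Measure.pi μ := by
  refine (Measure.pi_eq (μ := μ) fun s hs ↦ ?_).symm
  have hpre : (fun q : ((i : ι) → X i) × X j ↦ Function.update q.1 j q.2) ⁻¹' Set.univ.pi s
      = Set.univ.pi (Function.update s j Set.univ) ×ˢ s j := by
    ext ⟨x, t⟩
    simp only [Set.mem_preimage, Set.mem_prod, Set.update_mem_pi_iff, Set.mem_univ_pi]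
    grind
  rw [Measure.map_apply measurable_update' (MeasurableSet.univ_pi hs), hpre, Measure.prod_prod,
    Measure.pi_pi, ← Finset.prod_erase_mul _ _ (Finset.mem_univ j),
    ← Finset.prod_erase_mul _ _ (Finset.mem_univ j)]
  simp only [Function.update_self, measure_univ, mul_one]
  congr 1
  exact Finset.prod_congr rfl fun i hi ↦ by rw [Function.update_of_ne (Finset.ne_of_mem_erase hi)]

theorem integral_eq_integral_integral_update (j : ι) [IsProbabilityMeasure (μ j)]
    {φ : ((i : ι) → X i) → ℝ} (hφ : Integrable φ (Measure.pi μ)) :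
    ∫ x, φ x ∂Measure.pi μ = ∫ x, ∫ t, φ (Function.update x j t) ∂μ j ∂Measure.pi μ := by
  have hmp : MeasurePreserving (fun q : ((i : ι) → X i) × X j ↦ Function.update q.1 j q.2)
      ((Measure.pi μ).prod (μ j)) (Measure.pi μ) :=
    ⟨measurable_update', Measure.map_update_prod_pi μ j⟩
  calc ∫ x, φ x ∂Measure.pi μ
      = ∫ q, φ (Function.update q.1 j q.2) ∂(Measure.pi μ).prod (μ j) := by
        rw [← integral_map hmp.measurable.aemeasurable
          (by rw [hmp.map_eq]; exact hφ.aestronglyMeasurable),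
          hmp.map_eq]
    _ = _ := integral_prod _ (hmp.integrable_comp_of_integrable hφ)

theorem integral_mul_eq_zero_of_integral_update_eq_zero (j : ι) [IsProbabilityMeasure (μ j)]
    {φ ψ : ((i : ι) → X i) → ℝ} (hφψ : Integrable (fun x ↦ φ x * ψ x) (Measure.pi μ))
    (hψ : ∀ x t, ψ (Function.update x j t) = ψ x)
    (hφ : ∀ᵐ x ∂Measure.pi μ, ∫ t, φ (Function.update x j t) ∂μ j = 0) :
    ∫ x, φ x * ψ x ∂Measure.pi μ = 0 := by
  rw [integral_eq_integral_integral_update μ j hφψ]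
  refine integral_eq_zero_of_ae ?_
  filter_upwards [hφ] with x hx
  simp_rw [hψ, integral_mul_const, hx, zero_mul, Pi.zero_apply]

end Update

section Orthogonal

variable {α ι : Type*} [MeasurableSpace α] {μ : Measure α} [Fintype ι]

theorem integral_sq_sum_eq_sum_integral_sq {g : ι → α → ℝ}
    (hint : ∀ i k, Integrable (fun x ↦ g i x * g k x) μ)
    (horth : Pairwise fun i k ↦ ∫ x, g i x * g k x ∂μ = 0) :
    ∫ x, (∑ i, g i x) ^ 2 ∂μ = ∑ i, ∫ x, g i x ^ 2 ∂μ := by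
  classical
  simp_rw [sq, Finset.sum_mul_sum]
  rw [integral_finsetSum _ fun i _ ↦ integrable_finsetSum _ fun k _ ↦ hint i k]
  refine Finset.sum_congr rfl fun i _ ↦ ?_
  rw [integral_finsetSum _ fun k _ ↦ hint i k,
    Finset.sum_eq_single i (fun k _ hki ↦ horth hki.symm) (by simp)]

theorem integral_sq_le_integral_sq_sum {g : ι → α → ℝ}
    (hint : ∀ i k, Integrable (fun x ↦ g i x * g k x) μ)
    (horth : Pairwise fun i k ↦ ∫ x, g i x * g k x ∂μ = 0) (i : ι) :
    ∫ x, g i x ^ 2 ∂μ ≤ ∫ x, (∑ i, g i x) ^ 2 ∂μ := by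
  rw [integral_sq_sum_eq_sum_integral_sq hint horth]
  exact Finset.single_le_sum (f := fun k ↦ ∫ x, g k x ^ 2 ∂μ)
    (fun k _ ↦ integral_nonneg fun x ↦ sq_nonneg (g k x)) (Finset.mem_univ i)

end Orthogonal

theorem integral_le_toReal_mul_of_le_smul {α : Type*} [MeasurableSpace α] {μ ν : Measure α}
    {c : ℝ≥0∞} (hc : c ≠ ∞) (hle : μ ≤ c • ν) {f : α → ℝ} (hf : 0 ≤ f) (hfi : Integrable f ν) :
    ∫ x, f x ∂μ ≤ c.toReal * ∫ x, f x ∂ν := by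
  rw [← smul_eq_mul, ← integral_smul_measure]
  exact integral_mono_measure hle (.of_forall hf) (hfi.smul_measure hc)

theorem toReal_mul_integral_le_of_smul_le {α : Type*} [MeasurableSpace α] {μ ν : Measure α}
    {c : ℝ≥0∞} (hle : c • ν ≤ μ) {f : α → ℝ} (hf : 0 ≤ f) (hfi : Integrable f μ) :
    c.toReal * ∫ x, f x ∂ν ≤ ∫ x, f x ∂μ := by
  rw [← smul_eq_mul, ← integral_smul_measure]
  exact integral_mono_measure hle (.of_forall hf) hfi

theorem Integrable.mul_of_bounded {α : Type*} [MeasurableSpace α] {μ : Measure α}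
    [IsFiniteMeasure μ] {f g : α → ℝ} (hf : Measurable f) (hg : Measurable g)
    (hfb : ∃ C, ∀ x, |f x| ≤ C) (hgb : ∃ C, ∀ x, |g x| ≤ C) :
    Integrable (fun x ↦ f x * g x) μ := by
  obtain ⟨C, hC⟩ := hfb
  obtain ⟨D, hD⟩ := hgb
  exact (Integrable.of_bound hg.aestronglyMeasurable D (.of_forall hD)).bdd_mul
    hf.aestronglyMeasurable (.of_forall hC)

theorem ae_pi_mem_of_ae_mem {ι : Type*} [Fintype ι] {X : ι → Type*} [∀ i, MeasurableSpace (X i)]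
    {μ : Measure ((i : ι) → X i)} {ν : (i : ι) → Measure (X i)} [∀ i, SigmaFinite (ν i)]
    (hmarg : ∀ i, μ.map (fun x ↦ x i) = ν i) {t : (i : ι) → Set (X i)}
    (ht : ∀ i, MeasurableSet (t i)) (hμ : ∀ᵐ x ∂μ, ∀ i, x i ∈ t i) :
    ∀ᵐ x ∂Measure.pi ν, ∀ i, x i ∈ t i := by
  refine ae_all_iff.2 fun i ↦ (Measure.quasiMeasurePreserving_eval ν i).ae ?_
  rw [← hmarg i, ae_map_iff (p := (· ∈ t i)) (measurable_pi_apply i).aemeasurable (ht i)]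
  exact hμ.mono fun x hx ↦ hx i

theorem smul_pi_le_and_le_smul_pi_of_density_ratio {n : ℕ} {CL CU : ℝ} (hCL : 0 ≤ CL)
    (hCU : 0 ≤ CU) {pX : (Fin n → ℝ) → ℝ} {pj : Fin n → ℝ → ℝ} (hpXm : Measurable pX)
    (hpjm : ∀ j, Measurable (pj j)) (hpj0 : ∀ j x, 0 ≤ pj j x)
    {ℙ : Measure (Fin n → ℝ)} {Pj : Fin n → Measure ℝ} [∀ j, SigmaFinite (Pj j)]
    (hℙ : ℙ = volume.withDensity fun x ↦ ENNReal.ofReal (pX x))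
    (hPj : ∀ j, Pj j = volume.withDensity fun t ↦ ENNReal.ofReal (pj j t))
    (hmarg : ∀ j, ℙ.map (fun x ↦ x j) = Pj j) {K : Fin n → Set ℝ} (hK : ∀ j, MeasurableSet (K j))
    (hratio : ∀ x : Fin n → ℝ, (∀ j, x j ∈ K j) →
        CL * ∏ j, pj j (x j) ≤ pX x ∧ pX x ≤ CU * ∏ j, pj j (x j))
    (hout : ∀ x : Fin n → ℝ, ¬(∀ j, x j ∈ K j) → pX x = 0) :
    ENNReal.ofReal CL • Measure.pi Pj ≤ ℙ ∧ ℙ ≤ ENNReal.ofReal CU • Measure.pi Pj := by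
  set D : (Fin n → ℝ) → ℝ≥0∞ := fun x ↦ ∏ j, ENNReal.ofReal (pj j (x j))
  have hν : Measure.pi Pj = volume.withDensity D := by
    rw [show Pj = _ from funext hPj, Measure.pi_withDensity _ fun j ↦ (hpjm j).ennreal_ofReal,
      ← volume_pi]
  have hℙK : ∀ᵐ x ∂ℙ, ∀ j, x j ∈ K j := by
    rw [hℙ, ae_withDensity_iff hpXm.ennreal_ofReal]
    exact .of_forall fun x hx ↦ by_contra fun h ↦ hx (by rw [hout x h, ENNReal.ofReal_zero])
  have hDK : ∀ᵐ x ∂volume, D x ≠ 0 → ∀ j, x j ∈ K j := by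
    rw [← ae_withDensity_iff (by fun_prop), ← hν]
    exact ae_pi_mem_of_ae_mem hmarg hK hℙK
  have hcmp : ∀ᵐ x ∂volume, ENNReal.ofReal CL * D x ≤ ENNReal.ofReal (pX x)
      ∧ ENNReal.ofReal (pX x) ≤ ENNReal.ofReal CU * D x := by
    filter_upwards [hDK] with x hx
    by_cases hxK : ∀ j, x j ∈ K j
    · have hD : D x = ENNReal.ofReal (∏ j, pj j (x j)) :=
        (ENNReal.ofReal_prod_of_nonneg fun j _ ↦ hpj0 j (x j)).symm
      obtain ⟨hl, hu⟩ := hratio x hxK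
      rw [hD, ← ENNReal.ofReal_mul hCL, ← ENNReal.ofReal_mul hCU]
      exact ⟨ENNReal.ofReal_le_ofReal hl, ENNReal.ofReal_le_ofReal hu⟩
    · rw [not_ne_iff.1 (mt hx hxK), hout x hxK]
      simp
  rw [hν, hℙ, ← withDensity_smul' _ _ ENNReal.ofReal_ne_top,
    ← withDensity_smul' _ _ ENNReal.ofReal_ne_top]
  exact ⟨withDensity_mono (hcmp.mono fun x hx ↦ hx.1),
    withDensity_mono (hcmp.mono fun x hx ↦ hx.2)⟩

theorem pairwise_integral_mul_eq_zero_of_identifiable {ι : Type*} [Fintype ι] [DecidableEq ι]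
    {X : ι → Type*} [∀ i, MeasurableSpace (X i)] {μ : (i : ι) → Measure (X i)}
    [∀ i, IsProbabilityMeasure (μ i)] {g : Finset ι → ((i : ι) → X i) → ℝ}
    (hint : ∀ S T, Integrable (fun x ↦ g S x * g T x) (Measure.pi μ))
    (hdep : ∀ S : Finset ι, ∀ x y : (i : ι) → X i, (∀ j ∈ S, x j = y j) → g S x = g S y)
    (hident : ∀ S : Finset ι, ∀ j ∈ S, ∀ᵐ x ∂Measure.pi μ,
        ∫ t, g S (Function.update x j t) ∂μ j = 0) :
    Pairwise fun S T ↦ ∫ x, g S x * g T x ∂Measure.pi μ = 0 := by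
  have key : ∀ S T : Finset ι, ∀ j ∈ S, j ∉ T → ∫ x, g S x * g T x ∂Measure.pi μ = 0 :=
    fun S T j hjS hjT ↦ integral_mul_eq_zero_of_integral_update_eq_zero μ j (hint S T)
      (fun x t ↦ hdep T _ _ fun i hi ↦ Function.update_of_ne (ne_of_mem_of_not_mem hi hjT) _ _)
      (hident S j hjS)
  intro S T hST
  by_cases hTS : T ⊆ S
  · obtain ⟨j, hjS, hjT⟩ := Finset.exists_of_ssubset (hTS.ssubset_of_ne hST.symm)
    exact key S T j hjS hjT
  · obtain ⟨j, hjT, hjS⟩ := Finset.not_subset.1 hTS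
    simpa only [mul_comm] using key T S j hjT hjS

end MeasureTheory

/-- if the density of `ℙ` is comparable to the product of its marginal
densities (`C_L ≤ p_X/p^ind ≤ C_U` on `[0,1]^p`), then for functional-ANOVA components
`g_S` satisfying the `ℙ^ind`-identifiability condition one has
`‖∑_S g_S‖²_{L²(ℙ)} ≥ (C_L/C_U) ‖g_{S₀}‖²_{L²(ℙ)}` for every `S₀`. -/
theorem stmt13 (p : ℕ) (CL CU : ℝ) (hCL : 0 < CL) (hCU : CL ≤ CU)
    (pX : (Fin p → ℝ) → ℝ) (pj : Fin p → ℝ → ℝ)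
    (hpXm : Measurable pX) (hpjm : ∀ j, Measurable (pj j)) (hpj0 : ∀ j x, 0 ≤ pj j x)
    (ℙ : Measure (Fin p → ℝ)) (Pj : Fin p → Measure ℝ)
    (hℙ : ℙ = MeasureTheory.volume.withDensity (fun x => ENNReal.ofReal (pX x)))
    (hPj : ∀ j, Pj j = MeasureTheory.volume.withDensity (fun t => ENNReal.ofReal (pj j t)))
    (hprob : IsProbabilityMeasure ℙ)
    (hmarg : ∀ j, ℙ.map (fun x => x j) = Pj j)
    (hratio : ∀ x : Fin p → ℝ, (∀ j, x j ∈ Set.Icc (0 : ℝ) 1) →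
        CL * ∏ j, pj j (x j) ≤ pX x ∧ pX x ≤ CU * ∏ j, pj j (x j))
    (hout : ∀ x : Fin p → ℝ, ¬(∀ j, x j ∈ Set.Icc (0 : ℝ) 1) → pX x = 0)
    (g : Finset (Fin p) → (Fin p → ℝ) → ℝ)
    (hgm : ∀ S, Measurable (g S))
    (hgb : ∀ S, ∃ C : ℝ, ∀ x, |g S x| ≤ C)
    (hdep : ∀ S : Finset (Fin p), ∀ x y : Fin p → ℝ, (∀ j ∈ S, x j = y j) → g S x = g S y)
    (hident : ∀ S : Finset (Fin p), ∀ j ∈ S, ∀ᵐ x ∂(Measure.pi Pj),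
        ∫ t, g S (Function.update x j t) ∂(Pj j) = 0) :
    ∀ S₀ : Finset (Fin p),
      (CL / CU) * ∫ x, (g S₀ x) ^ 2 ∂ℙ ≤ ∫ x, (∑ S : Finset (Fin p), g S x) ^ 2 ∂ℙ := by
  intro S₀
  have hCU0 : 0 < CU := hCL.trans_le hCU
  have : ∀ j, IsProbabilityMeasure (Pj j) := fun j ↦
    hmarg j ▸ Measure.isProbabilityMeasure_map (measurable_pi_apply j).aemeasurable
  obtain ⟨hlow, hup⟩ := smul_pi_le_and_le_smul_pi_of_density_ratio hCL.le hCU0.le hpXm hpjm hpj0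
    hℙ hPj hmarg (fun _ ↦ measurableSet_Icc) hratio hout
  have hint : ∀ (μ : Measure (Fin p → ℝ)) [IsFiniteMeasure μ] (S T : Finset (Fin p)),
      Integrable (fun x ↦ g S x * g T x) μ := fun μ _ S T ↦
    Integrable.mul_of_bounded (hgm S) (hgm T) (hgb S) (hgb T)
  have hsum_sq : Integrable (fun x ↦ (∑ S, g S x) ^ 2) ℙ := by
    simp_rw [sq, Finset.sum_mul_sum]
    exact integrable_finsetSum _ fun S _ ↦ integrable_finsetSum _ fun T _ ↦ hint ℙ S T
  calc CL / CU * ∫ x, g S₀ x ^ 2 ∂ℙ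
      ≤ CL / CU * (CU * ∫ x, g S₀ x ^ 2 ∂Measure.pi Pj) := by
        gcongr
        simpa only [ENNReal.toReal_ofReal hCU0.le] using
          integral_le_toReal_mul_of_le_smul ENNReal.ofReal_ne_top hup (fun x ↦ sq_nonneg _)
            (by simpa only [sq] using hint _ S₀ S₀)
    _ = CL * ∫ x, g S₀ x ^ 2 ∂Measure.pi Pj := by field_simp
    _ ≤ CL * ∫ x, (∑ S, g S x) ^ 2 ∂Measure.pi Pj := by
        refine mul_le_mul_of_nonneg_left ?_ hCL.le
        exact integral_sq_le_integral_sq_sum (hint _)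
          (pairwise_integral_mul_eq_zero_of_identifiable (hint _) hdep hident) S₀
    _ ≤ ∫ x, (∑ S, g S x) ^ 2 ∂ℙ := by
        simpa only [ENNReal.toReal_ofReal hCL.le] using
          toReal_mul_integral_le_of_smul_le hlow (fun x ↦ sq_nonneg _) hsum_sq
end
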